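/- arXiv:2405.19362 — 6 statements merged into one kernel-verified Lean document; each statement's English description precedes it below -/
import Mathlib

section
/- Let n ≥ 1 be an integer, 1 ≤ p < ∞ and 0 ≤ β ≤ n. If f : ℝⁿ → ℂ has finite Morrey norm ‖f‖_{L^{p,β}} < ∞ and g ∈ L¹(ℝⁿ), then the convolution (f ∗ g)(x) = ∫_{ℝⁿ} f(x − z) g(z) dz is defined for almost every x ∈ ℝⁿ and satisfies the Young-type inequality ‖f ∗ g‖_{L^{p,β}} ≤ ‖g‖_{L¹} · ‖f‖_{L^{p,β}}. -/
/-!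
Bound `|f ∗ g|(x)` by `Φ(x) = ∫ |f(x - z)| |g(z)| dz`. Hölder's inequality for the finite measure
`|g(z)| dz` gives `Φ(x)^p ≤ ‖g‖₁^(p-1) ∫ |f(x - z)|^p |g(z)| dz`; integrating over a ball `B(y, r)`
and exchanging the integrals, every translate `f(· - z)` contributes at most
`r^β ‖f‖_{L^{p,β}}^p`, so `r^(-β) ∫_{B(y,r)} Φ^p ≤ (‖g‖₁ ‖f‖_{L^{p,β}})^p`. In particular `Φ^p`
is integrable on every ball, so `Φ` is finite almost everywhere.
-/

open MeasureTheory Metric ENNReal Filter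

noncomputable def morreyA (n : ℕ) (p β : ℝ)
    (f : EuclideanSpace ℝ (Fin n) → ℂ)
    (y : EuclideanSpace ℝ (Fin n)) (r : ℝ) : ℝ≥0∞ :=
  ENNReal.ofReal (r ^ (-β)) * ∫⁻ x in ball y r, (‖f x‖₊ : ℝ≥0∞) ^ p

/-- The (global) Morrey norm `‖f‖_{L^{p,β}}`. -/
noncomputable def morreyNorm (n : ℕ) (p β : ℝ)
    (f : EuclideanSpace ℝ (Fin n) → ℂ) : ℝ≥0∞ :=
  ⨆ (y : EuclideanSpace ℝ (Fin n)) (r : ℝ) (_ : 0 < r),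
    (morreyA n p β f y r) ^ (1 / p)

section Jensen

variable {α : Type*} [MeasurableSpace α] {μ : Measure α} {p : ℝ}

theorem rpow_lintegral_le (hp : 1 ≤ p) {f : α → ℝ≥0∞} (hf : AEMeasurable f μ) :
    (∫⁻ x, f x ∂μ) ^ p ≤ μ Set.univ ^ (p - 1) * ∫⁻ x, f x ^ p ∂μ := by
  have hp0 : 0 < p := zero_lt_one.trans_le hp
  have h := eLpNorm'_le_eLpNorm'_mul_rpow_measure_univ zero_lt_one hp hf.aestronglyMeasurable
  simp only [eLpNorm', enorm_eq_self, ENNReal.rpow_one, div_one] at h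
  calc (∫⁻ x, f x ∂μ) ^ p
      ≤ ((∫⁻ x, f x ^ p ∂μ) ^ (1 / p) * μ Set.univ ^ (1 - 1 / p)) ^ p :=
        ENNReal.rpow_le_rpow h hp0.le
    _ = μ Set.univ ^ (p - 1) * ∫⁻ x, f x ^ p ∂μ := by
        rw [ENNReal.mul_rpow_of_nonneg _ _ hp0.le, ← ENNReal.rpow_mul, ← ENNReal.rpow_mul,
          one_div_mul_cancel hp0.ne', ENNReal.rpow_one, sub_mul, one_mul,
          one_div_mul_cancel hp0.ne', mul_comm]

theorem rpow_lintegral_mul_le (hp : 1 ≤ p) {f w : α → ℝ≥0∞} (hf : AEMeasurable f μ)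
    (hw : AEMeasurable w μ) :
    (∫⁻ x, f x * w x ∂μ) ^ p ≤ (∫⁻ x, w x ∂μ) ^ (p - 1) * ∫⁻ x, f x ^ p * w x ∂μ := by
  have h := rpow_lintegral_le hp (hf.mono' (withDensity_absolutelyContinuous μ w))
  simpa only [withDensity_apply _ MeasurableSet.univ, Measure.restrict_univ,
    lintegral_withDensity_eq_lintegral_mul₀ hw hf,
    lintegral_withDensity_eq_lintegral_mul₀ hw (hf.pow_const p), Pi.mul_apply, mul_comm (w _)]
    using h

end Jensen

theorem ae_lt_top_of_setLIntegral_ball_ne_top {X : Type*} [PseudoMetricSpace X]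
    [MeasurableSpace X] {μ : Measure X} {F : X → ℝ≥0∞} (hF : AEMeasurable F μ) (a : X)
    (h : ∀ k : ℕ, ∫⁻ x in ball a (k + 1), F x ∂μ ≠ ⊤) : ∀ᵐ x ∂μ, F x < ⊤ := by
  rw [← Measure.restrict_univ (μ := μ), ← iUnion_ball_nat_succ a, ae_restrict_iUnion_iff]
  exact fun k => ae_lt_top' hF.restrict (h k)

section Convolution

variable {E : Type*} [NormedAddCommGroup E] [MeasurableSpace E] [BorelSpace E] {μ : Measure E}
  [μ.IsAddRightInvariant]

theorem setLIntegral_ball_comp_sub_right (F : E → ℝ≥0∞) (y z : E) (r : ℝ) :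
    ∫⁻ x in ball y r, F (x - z) ∂μ = ∫⁻ x in ball (y - z) r, F x ∂μ := by
  have hpre : (· - z) ⁻¹' ball (y - z) r = ball y r := by
    ext x
    simp
  rw [← hpre]
  exact (measurePreserving_sub_right μ z).setLIntegral_comp_preimage_emb
    (MeasurableEquiv.subRight z).measurableEmbedding F _

variable [SecondCountableTopology E] [SFinite μ]

theorem setLIntegral_ball_rpow_lintegral_comp_sub_mul_le {p r : ℝ} {C : ℝ≥0∞} (hp : 1 ≤ p)
    {F w : E → ℝ≥0∞} (hF : Measurable F) (hw : Measurable w)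
    (hC : ∀ y, ∫⁻ x in ball y r, F x ^ p ∂μ ≤ C) (y : E) :
    ∫⁻ x in ball y r, (∫⁻ z, F (x - z) * w z ∂μ) ^ p ∂μ ≤ (∫⁻ z, w z ∂μ) ^ p * C := by
  set S := ∫⁻ z, w z ∂μ
  have hG : Measurable fun q : E × E => F (q.1 - q.2) ^ p * w q.2 :=
    ((hF.comp measurable_sub).pow_const p).mul (hw.comp measurable_snd)
  have hGx : Measurable fun x => ∫⁻ z, F (x - z) ^ p * w z ∂μ := hG.lintegral_prod_right'
  calc ∫⁻ x in ball y r, (∫⁻ z, F (x - z) * w z ∂μ) ^ p ∂μ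
      ≤ ∫⁻ x in ball y r, S ^ (p - 1) * ∫⁻ z, F (x - z) ^ p * w z ∂μ ∂μ :=
        lintegral_mono fun x => rpow_lintegral_mul_le hp
          (hF.comp (measurable_const.sub measurable_id)).aemeasurable hw.aemeasurable
    _ = S ^ (p - 1) * ∫⁻ z, (∫⁻ x in ball y r, F (x - z) ^ p ∂μ) * w z ∂μ := by
        rw [lintegral_const_mul _ hGx, lintegral_lintegral_swap hG.aemeasurable]
        congr 1
        exact lintegral_congr fun z =>
          lintegral_mul_const _ ((hF.comp (measurable_sub_const z)).pow_const p)
    _ ≤ S ^ (p - 1) * ∫⁻ z, C * w z ∂μ := by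
        gcongr with z
        rw [setLIntegral_ball_comp_sub_right (fun x => F x ^ p)]
        exact hC _
    _ = S ^ (p - 1 + 1) * C := by
        rw [lintegral_const_mul _ hw, ENNReal.rpow_add_of_nonneg _ _ (by linarith) zero_le_one,
          ENNReal.rpow_one]
        ring
    _ = S ^ p * C := by rw [sub_add_cancel]

end Convolution

section Morrey

variable {n : ℕ} {p β : ℝ} {f : EuclideanSpace ℝ (Fin n) → ℂ}

theorem morreyNorm_le_iff (hp : 0 < p) {C : ℝ≥0∞} :
    morreyNorm n p β f ≤ C ↔ ∀ y r, 0 < r → morreyA n p β f y r ≤ C ^ p := by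
  simp only [morreyNorm, iSup_le_iff, one_div, ENNReal.rpow_inv_le_iff hp]

theorem morreyA_lintegral_comp_sub_mul_le (hp : 1 ≤ p) (hf : Measurable f)
    {w : EuclideanSpace ℝ (Fin n) → ℝ≥0∞} (hw : Measurable w) (y : EuclideanSpace ℝ (Fin n))
    {r : ℝ} (hr : 0 < r) :
    ENNReal.ofReal (r ^ (-β)) *
        ∫⁻ x in ball y r, (∫⁻ z, (‖f (x - z)‖₊ : ℝ≥0∞) * w z) ^ p ≤
      ((∫⁻ z, w z) * morreyNorm n p β f) ^ p := by
  have hp0 : 0 < p := zero_lt_one.trans_le hp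
  set c := ENNReal.ofReal (r ^ (-β))
  have hc : c ≠ 0 := by positivity
  have hball : ∀ y', ∫⁻ x in ball y' r, (‖f x‖₊ : ℝ≥0∞) ^ p ≤ morreyNorm n p β f ^ p / c :=
    fun y' => (ENNReal.le_div_iff_mul_le (.inl hc) (.inl ENNReal.ofReal_ne_top)).2 <| by
      rw [mul_comm]
      exact (morreyNorm_le_iff hp0).1 le_rfl y' r hr
  calc c * ∫⁻ x in ball y r, (∫⁻ z, (‖f (x - z)‖₊ : ℝ≥0∞) * w z) ^ p
      ≤ c * ((∫⁻ z, w z) ^ p * (morreyNorm n p β f ^ p / c)) := by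
        gcongr
        exact setLIntegral_ball_rpow_lintegral_comp_sub_mul_le hp hf.enorm hw hball y
    _ = ((∫⁻ z, w z) * morreyNorm n p β f) ^ p := by
        rw [mul_left_comm, ENNReal.mul_div_cancel hc ENNReal.ofReal_ne_top,
          ENNReal.mul_rpow_of_nonneg _ _ hp0.le]

theorem ae_lintegral_comp_sub_mul_lt_top (hp : 1 ≤ p) (hf : Measurable f)
    (hfM : morreyNorm n p β f < ⊤) {w : EuclideanSpace ℝ (Fin n) → ℝ≥0∞} (hw : Measurable w)
    (hw_fin : ∫⁻ z, w z < ⊤) :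
    ∀ᵐ x, ∫⁻ z, (‖f (x - z)‖₊ : ℝ≥0∞) * w z < ⊤ := by
  have hp0 : 0 < p := zero_lt_one.trans_le hp
  have hfinite : ((∫⁻ z, w z) * morreyNorm n p β f) ^ p ≠ ⊤ :=
    ENNReal.rpow_ne_top_of_nonneg hp0.le (ENNReal.mul_ne_top hw_fin.ne hfM.ne)
  have hmeas : Measurable fun x => ∫⁻ z, (‖f (x - z)‖₊ : ℝ≥0∞) * w z :=
    ((hf.comp measurable_sub).enorm.mul (hw.comp measurable_snd)).lintegral_prod_right'
  refine (ae_lt_top_of_setLIntegral_ball_ne_top (hmeas.pow_const p).aemeasurable 0 fun k => ?_).mono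
    fun x hx => (ENNReal.rpow_lt_top_iff_of_pos hp0).1 hx
  have hk : (0 : ℝ) < k + 1 := by positivity
  have hc : ENNReal.ofReal ((k + 1 : ℝ) ^ (-β)) ≠ 0 := by positivity
  exact fun hI => ne_top_of_le_ne_top hfinite
    (morreyA_lintegral_comp_sub_mul_le hp hf hw 0 hk) (ENNReal.mul_eq_top.2 (.inl ⟨hc, hI⟩))

end Morrey

theorem morrey_young_convolution_general (n : ℕ) (p β : ℝ)
    (hp : 1 ≤ p)
    (f g : EuclideanSpace ℝ (Fin n) → ℂ) (hf : Measurable f)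
    (hfM : morreyNorm n p β f < ⊤) (hg : Integrable g) :
    (∀ᵐ x : EuclideanSpace ℝ (Fin n), Integrable (fun z => f (x - z) * g z)) ∧
    morreyNorm n p β (fun x => ∫ z, f (x - z) * g z) ≤
      (∫⁻ z, (‖g z‖₊ : ℝ≥0∞)) * morreyNorm n p β f := by
  obtain ⟨w, hw, hgw⟩ : AEMeasurable fun z => (‖g z‖₊ : ℝ≥0∞) :=
    hg.aestronglyMeasurable.enorm
  have hconv : ∀ x, ∫⁻ z, ‖f (x - z) * g z‖ₑ = ∫⁻ z, (‖f (x - z)‖₊ : ℝ≥0∞) * w z := fun x =>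
    lintegral_congr_ae <| hgw.mono fun z hz => by simp only [← hz, enorm_mul]; rfl
  have hg_norm : ∫⁻ z, (‖g z‖₊ : ℝ≥0∞) = ∫⁻ z, w z := lintegral_congr_ae hgw
  constructor
  · filter_upwards [ae_lintegral_comp_sub_mul_lt_top hp hf hfM hw (hg_norm ▸ hg.2)] with x hx
    refine ⟨(hf.comp (measurable_const.sub measurable_id)).aestronglyMeasurable.mul
      hg.aestronglyMeasurable, ?_⟩
    rwa [hasFiniteIntegral_iff_enorm, hconv]
  · refine (morreyNorm_le_iff (zero_lt_one.trans_le hp)).2 fun y r hr => ?_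
    refine le_trans ?_ (hg_norm ▸ morreyA_lintegral_comp_sub_mul_le hp hf hw y hr)
    unfold morreyA
    gcongr with x
    exact (enorm_integral_le_lintegral_enorm _).trans (hconv x).le

/-- Young-type convolution inequality in Morrey spaces: if `‖f‖_{L^{p,β}} < ∞` and `g ∈ L¹`,
then `(f ∗ g)(x) = ∫ f(x−z) g(z) dz` is defined for a.e. `x` and
`‖f ∗ g‖_{L^{p,β}} ≤ ‖g‖_{L¹} · ‖f‖_{L^{p,β}}`. -/
theorem morrey_young_convolution (n : ℕ) (hn : 1 ≤ n) (p β : ℝ)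
    (hp : 1 ≤ p) (hβ : 0 ≤ β) (hβn : β ≤ n)
    (f g : EuclideanSpace ℝ (Fin n) → ℂ) (hf : Measurable f)
    (hfM : morreyNorm n p β f < ⊤) (hg : Integrable g) :
    (∀ᵐ x : EuclideanSpace ℝ (Fin n), Integrable (fun z => f (x - z) * g z)) ∧
    morreyNorm n p β (fun x => ∫ z, f (x - z) * g z) ≤
      (∫⁻ z, (‖g z‖₊ : ℝ≥0∞)) * morreyNorm n p β f :=
  morrey_young_convolution_general n p β hp f g hf hfM hg
end

section
/- Let n ≥ 1 be an integer, 1 ≤ p < ∞ and 0 ≤ β < n. The vanishing-at-infinity subspace L^{p,β}_∞(ℝⁿ) and the truncation subspace L^{p,β}_*(ℝⁿ) are both closed in the Morrey space L^{p,β}(ℝⁿ): if (f_k) is a sequence in one of these subspaces, f ∈ L^{p,β}(ℝⁿ), and ‖f_k − f‖_{L^{p,β}} → 0 as k → ∞, then f belongs to that same subspace. -/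
open MeasureTheory Metric ENNReal Filter

/-- Membership in the vanishing-at-origin subspace `L^{p,β}_0`. -/
def vanishAtOrigin (n : ℕ) (p β : ℝ) (f : EuclideanSpace ℝ (Fin n) → ℂ) : Prop :=
  Tendsto
    (fun t : ℝ => ⨆ (y : EuclideanSpace ℝ (Fin n)) (r : ℝ) (_ : 0 < r) (_ : r ≤ t),
      morreyA n p β f y r)
    (nhdsWithin 0 (Set.Ioi 0)) (nhds 0)

/-- Membership in the vanishing-at-infinity subspace `L^{p,β}_∞`. -/
def vanishAtInfinity (n : ℕ) (p β : ℝ) (f : EuclideanSpace ℝ (Fin n) → ℂ) : Prop :=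
  Tendsto
    (fun t : ℝ => ⨆ (y : EuclideanSpace ℝ (Fin n)) (r : ℝ) (_ : t ≤ r),
      morreyA n p β f y r)
    atTop (nhds 0)

/-- Membership in the truncation subspace `L^{p,β}_*`. -/
def vanishTrunc (n : ℕ) (p β : ℝ) (f : EuclideanSpace ℝ (Fin n) → ℂ) : Prop :=
  Tendsto
    (fun N : ℝ => ⨆ (y : EuclideanSpace ℝ (Fin n)) (r : ℝ) (_ : 0 < r),
      ENNReal.ofReal (r ^ (-β)) *
        ∫⁻ x in ball y r ∩ {x : EuclideanSpace ℝ (Fin n) | N < ‖x‖},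
          (‖f x‖₊ : ℝ≥0∞) ^ p)
    atTop (nhds 0)

/-- Abstract closedness lemma. -/
lemma morrey_key_abstract {ι : Type*} {l : Filter ι}
    (S : ι → ℝ≥0∞) (Sk : ℕ → ι → ℝ≥0∞) (D : ℕ → ℝ≥0∞) (C : ℝ≥0∞) (hC : C ≠ ⊤)
    (hbound : ∀ k, ∀ᶠ t in l, S t ≤ C * (D k + Sk k t))
    (hD : ∀ δ : ℝ≥0∞, 0 < δ → ∃ k, D k ≤ δ)
    (hSk : ∀ k, Tendsto (Sk k) l (nhds 0)) :
    Tendsto S l (nhds 0) := by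
  rw [ENNReal.tendsto_nhds_zero]
  intro ε hε
  set ε' := min ε 1 with hε'
  have hε'pos : 0 < ε' := lt_min hε zero_lt_one
  have hne : (2 * C + 1) ≠ ⊤ :=
    ENNReal.add_ne_top.2 ⟨ENNReal.mul_ne_top (by simp) hC, ENNReal.one_ne_top⟩
  set δ := ε' / (2 * C + 1) with hδ
  have hδpos : 0 < δ := ENNReal.div_pos hε'pos.ne' hne
  obtain ⟨k, hk⟩ := hD δ hδpos
  filter_upwards [hbound k, ENNReal.tendsto_nhds_zero.1 (hSk k) δ hδpos] with t h1 h2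
  calc S t ≤ C * (D k + Sk k t) := h1
    _ ≤ C * (δ + δ) := by gcongr
    _ = (2 * C) * δ := by ring
    _ ≤ (2 * C + 1) * δ := by gcongr; exact le_self_add
    _ ≤ ε' := ENNReal.mul_div_le
    _ ≤ ε := min_le_left _ _

/-- A triangle-type inequality for `p`-th power lintegrals. -/
lemma morrey_lintegral_tri {X : Type*} [MeasurableSpace X] (μ : Measure X)
    {p : ℝ} (hp : 1 ≤ p) (g f : X → ℂ) (hg : Measurable g) (hf : Measurable f) :
    ∫⁻ x, (‖f x‖₊ : ℝ≥0∞) ^ p ∂μ ≤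
      (2 : ℝ≥0∞) ^ (p - 1) *
        ((∫⁻ x, (‖g x - f x‖₊ : ℝ≥0∞) ^ p ∂μ) + ∫⁻ x, (‖g x‖₊ : ℝ≥0∞) ^ p ∂μ) := by
  have hmeas : Measurable fun x => (‖g x - f x‖₊ : ℝ≥0∞) ^ p :=
    ENNReal.continuous_rpow_const.measurable.comp
      (measurable_coe_nnreal_ennreal.comp (hg.sub hf).nnnorm)
  calc ∫⁻ x, (‖f x‖₊ : ℝ≥0∞) ^ p ∂μ
      ≤ ∫⁻ x, (2 : ℝ≥0∞) ^ (p - 1) *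
          ((‖g x - f x‖₊ : ℝ≥0∞) ^ p + (‖g x‖₊ : ℝ≥0∞) ^ p) ∂μ := by
        refine lintegral_mono fun x => ?_
        have h1 : ‖f x‖₊ ≤ ‖g x - f x‖₊ + ‖g x‖₊ := by
          have h0 : f x = g x - (g x - f x) := by ring
          conv_lhs => rw [h0]
          exact (nnnorm_sub_le _ _).trans (le_of_eq (add_comm _ _))
        have h2 : (‖f x‖₊ : ℝ≥0∞) ≤ (‖g x - f x‖₊ : ℝ≥0∞) + (‖g x‖₊ : ℝ≥0∞) := by
          exact_mod_cast h1
        calc (‖f x‖₊ : ℝ≥0∞) ^ p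
            ≤ ((‖g x - f x‖₊ : ℝ≥0∞) + (‖g x‖₊ : ℝ≥0∞)) ^ p :=
              ENNReal.rpow_le_rpow h2 (zero_le_one.trans hp)
          _ ≤ _ := ENNReal.rpow_add_le_mul_rpow_add_rpow _ _ hp
    _ = (2 : ℝ≥0∞) ^ (p - 1) *
          ∫⁻ x, ((‖g x - f x‖₊ : ℝ≥0∞) ^ p + (‖g x‖₊ : ℝ≥0∞) ^ p) ∂μ :=
        lintegral_const_mul' _ _
          (ENNReal.rpow_ne_top_of_nonneg (by linarith) (by simp))
    _ = _ := by rw [lintegral_add_left hmeas]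

lemma morrey_A_le_norm_pow (n : ℕ) (p β : ℝ) (hp : 1 ≤ p)
    (g : EuclideanSpace ℝ (Fin n) → ℂ) (y : EuclideanSpace ℝ (Fin n)) {r : ℝ} (hr : 0 < r) :
    morreyA n p β g y r ≤ (morreyNorm n p β g) ^ p := by
  have hp0 : p ≠ 0 := by positivity
  have h1 : (morreyA n p β g y r) ^ (1 / p) ≤ morreyNorm n p β g :=
    le_iSup_of_le y (le_iSup_of_le r (le_iSup_of_le hr le_rfl))
  calc morreyA n p β g y r
      = ((morreyA n p β g y r) ^ (1 / p)) ^ p := by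
        rw [← ENNReal.rpow_mul, one_div, inv_mul_cancel₀ hp0, ENNReal.rpow_one]
    _ ≤ _ := ENNReal.rpow_le_rpow h1 (zero_le_one.trans hp)

/-- The vanishing-at-infinity subspace `L^{p,β}_∞(ℝⁿ)` and the truncation subspace
`L^{p,β}_*(ℝⁿ)` are closed in `L^{p,β}(ℝⁿ)`. -/
theorem vanishAtInfinity_and_trunc_closed (n : ℕ) (hn : 1 ≤ n) (p β : ℝ)
    (hp : 1 ≤ p) (hβ : 0 ≤ β) (hβn : β < n)
    (fk : ℕ → EuclideanSpace ℝ (Fin n) → ℂ) (f : EuclideanSpace ℝ (Fin n) → ℂ)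
    (hfk : ∀ k, Measurable (fk k)) (hf : Measurable f)
    (hfkM : ∀ k, morreyNorm n p β (fk k) < ⊤) (hfM : morreyNorm n p β f < ⊤)
    (hconv : Tendsto (fun k => morreyNorm n p β (fun x => fk k x - f x)) atTop (nhds 0)) :
    ((∀ k, vanishAtInfinity n p β (fk k)) → vanishAtInfinity n p β f) ∧
    ((∀ k, vanishTrunc n p β (fk k)) → vanishTrunc n p β f) := by
  have hp0 : (0 : ℝ) ≤ p := zero_le_one.trans hp
  have hpne : p ≠ 0 := by positivity
  set C : ℝ≥0∞ := (2 : ℝ≥0∞) ^ (p - 1) with hCdef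
  have hC : C ≠ ⊤ := ENNReal.rpow_ne_top_of_nonneg (by linarith) (by simp)
  set D : ℕ → ℝ≥0∞ := fun k => (morreyNorm n p β (fun x => fk k x - f x)) ^ p with hDdef
  have hD : ∀ δ : ℝ≥0∞, 0 < δ → ∃ k, D k ≤ δ := by
    intro δ hδ
    by_cases hδtop : δ = ⊤
    · exact ⟨0, hδtop ▸ le_top⟩
    · have hη : (0 : ℝ≥0∞) < δ ^ (1 / p) := ENNReal.rpow_pos hδ hδtop
      obtain ⟨k, hk⟩ := (ENNReal.tendsto_nhds_zero.1 hconv _ hη).exists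
      refine ⟨k, ?_⟩
      calc D k ≤ (δ ^ (1 / p)) ^ p := ENNReal.rpow_le_rpow hk hp0
        _ = δ := by
            rw [← ENNReal.rpow_mul, one_div, inv_mul_cancel₀ hpne, ENNReal.rpow_one]
  constructor
  · -- vanishing at infinity
    intro hvan
    refine morrey_key_abstract _
      (fun k t => ⨆ (y : EuclideanSpace ℝ (Fin n)) (r : ℝ) (_ : t ≤ r), morreyA n p β (fk k) y r)
      D C hC ?_ hD hvan
    intro k
    filter_upwards [eventually_ge_atTop (1 : ℝ)] with t ht
    refine iSup_le fun y => iSup_le fun r => iSup_le fun hr => ?_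
    have hr0 : (0 : ℝ) < r := lt_of_lt_of_le one_pos (ht.trans hr)
    have hkey := morrey_lintegral_tri (volume.restrict (ball y r)) hp (fk k) f (hfk k) hf
    have h2 : morreyA n p β f y r ≤
        C * (morreyA n p β (fun x => fk k x - f x) y r + morreyA n p β (fk k) y r) := by
      simp only [morreyA]
      calc ENNReal.ofReal (r ^ (-β)) * ∫⁻ x in ball y r, (‖f x‖₊ : ℝ≥0∞) ^ p
          ≤ ENNReal.ofReal (r ^ (-β)) *
              (C * ((∫⁻ x in ball y r, (‖fk k x - f x‖₊ : ℝ≥0∞) ^ p) +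
                ∫⁻ x in ball y r, (‖fk k x‖₊ : ℝ≥0∞) ^ p)) := mul_le_mul_right hkey _
        _ = C * (ENNReal.ofReal (r ^ (-β)) * (∫⁻ x in ball y r, (‖fk k x - f x‖₊ : ℝ≥0∞) ^ p) +
              ENNReal.ofReal (r ^ (-β)) * ∫⁻ x in ball y r, (‖fk k x‖₊ : ℝ≥0∞) ^ p) := by ring
    refine h2.trans ?_
    gcongr
    · exact morrey_A_le_norm_pow n p β hp _ y hr0
    · exact le_iSup_of_le y (le_iSup_of_le r (le_iSup_of_le hr le_rfl))
  · -- truncation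
    intro hvan
    refine morrey_key_abstract _
      (fun k N => ⨆ (y : EuclideanSpace ℝ (Fin n)) (r : ℝ) (_ : 0 < r),
        ENNReal.ofReal (r ^ (-β)) *
          ∫⁻ x in ball y r ∩ {x : EuclideanSpace ℝ (Fin n) | N < ‖x‖},
            (‖fk k x‖₊ : ℝ≥0∞) ^ p)
      D C hC ?_ hD hvan
    intro k
    refine Eventually.of_forall fun N => ?_
    refine iSup_le fun y => iSup_le fun r => iSup_le fun hr0 => ?_
    set s := ball y r ∩ {x : EuclideanSpace ℝ (Fin n) | N < ‖x‖} with hs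
    have hkey := morrey_lintegral_tri (volume.restrict s) hp (fk k) f (hfk k) hf
    calc ENNReal.ofReal (r ^ (-β)) * ∫⁻ x in s, (‖f x‖₊ : ℝ≥0∞) ^ p
        ≤ ENNReal.ofReal (r ^ (-β)) *
            (C * ((∫⁻ x in s, (‖fk k x - f x‖₊ : ℝ≥0∞) ^ p) +
              ∫⁻ x in s, (‖fk k x‖₊ : ℝ≥0∞) ^ p)) := mul_le_mul_right hkey _
      _ = C * (ENNReal.ofReal (r ^ (-β)) * (∫⁻ x in s, (‖fk k x - f x‖₊ : ℝ≥0∞) ^ p) +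
            ENNReal.ofReal (r ^ (-β)) * ∫⁻ x in s, (‖fk k x‖₊ : ℝ≥0∞) ^ p) := by ring
      _ ≤ C * (D k + ⨆ (y : EuclideanSpace ℝ (Fin n)) (r : ℝ) (_ : 0 < r),
            ENNReal.ofReal (r ^ (-β)) *
              ∫⁻ x in ball y r ∩ {x : EuclideanSpace ℝ (Fin n) | N < ‖x‖},
                (‖fk k x‖₊ : ℝ≥0∞) ^ p) := by
          gcongr
          · calc ENNReal.ofReal (r ^ (-β)) * ∫⁻ x in s, (‖fk k x - f x‖₊ : ℝ≥0∞) ^ p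
                ≤ morreyA n p β (fun x => fk k x - f x) y r := by
                  rw [morreyA]
                  exact mul_le_mul_right (lintegral_mono_set Set.inter_subset_left) _
              _ ≤ D k := morrey_A_le_norm_pow n p β hp _ y hr0
          · exact le_iSup_of_le y (le_iSup_of_le r (le_iSup_of_le hr0 le_rfl))
end

section
/- Let n ≥ 1 be an integer, 1 ≤ p < ∞ and 0 < β < n. There exists a function f ∈ L^{p,β}(ℝⁿ) that belongs to both the vanishing-at-origin subspace L^{p,β}_0(ℝⁿ) and the vanishing-at-infinity subspace L^{p,β}_∞(ℝⁿ) but does not belong to the truncation subspace L^{p,β}_*(ℝⁿ). -/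
open MeasureTheory Metric ENNReal Filter

/-!
Let `S` be the union of the unit balls centred at `4ᵏ e` (`k ∈ ℕ`, `‖e‖ = 1`) and `f = 1_S`.
Since `f` is bounded, `r^{-β} |B(y,r) ∩ S| ≤ r^{n-β} |B(0,1)|`, which vanishes as `r → 0`.
The centres spread out geometrically, so a ball of radius `r` meets only `O(log r)` of the
unit balls, and `r^{-β} |B(y,r) ∩ S| = O(r^{-β} log r)` vanishes as `r → ∞`. Yet for every
`N` some unit ball of `S` lies in `{|x| > N}`, so at radius `1` the truncated Morrey quantity
stays equal to `|B(0,1)|`.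
-/

open Topology

section GeomBalls

variable {E : Type*} [NormedAddCommGroup E] [NormedSpace ℝ E]

def geomBalls (e : E) : Set E := ⋃ k : ℕ, ball ((4 : ℝ) ^ k • e) 1

lemma isOpen_geomBalls (e : E) : IsOpen (geomBalls e) :=
  isOpen_iUnion fun _ => isOpen_ball

lemma exists_ball_subset_geomBalls {e : E} (he : ‖e‖ = 1) (N : ℝ) :
    ∃ y : E, N + 1 ≤ ‖y‖ ∧ ball y 1 ⊆ geomBalls e := by
  obtain ⟨j, hj⟩ := pow_unbounded_of_one_lt (N + 1) (by norm_num : (1 : ℝ) < 4)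
  refine ⟨(4 : ℝ) ^ j • e, ?_, Set.subset_iUnion (fun k => ball ((4 : ℝ) ^ k • e) 1) j⟩
  rw [norm_smul, he, mul_one, Real.norm_of_nonneg (by positivity)]
  exact hj.le

lemma four_pow_sub_le {m k : ℕ} (hmk : m ≤ k) : (4 : ℝ) ^ (k - m) ≤ 4 ^ k - 4 ^ m + 1 := by
  obtain ⟨j, rfl⟩ := Nat.exists_eq_add_of_le hmk
  rw [Nat.add_sub_cancel_left, pow_add]
  nlinarith [one_le_pow₀ (by norm_num : (1 : ℝ) ≤ 4) (n := m),
    one_le_pow₀ (by norm_num : (1 : ℝ) ≤ 4) (n := j)]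

lemma sub_lt_logb_of_inter_nonempty {e y : E} (he : ‖e‖ = 1) {r : ℝ} {m k : ℕ} (hmk : m ≤ k)
    (hm : (ball y r ∩ ball ((4 : ℝ) ^ m • e) 1).Nonempty)
    (hk : (ball y r ∩ ball ((4 : ℝ) ^ k • e) 1).Nonempty) :
    ((k - m : ℕ) : ℝ) < Real.logb 4 (2 * r + 3) := by
  obtain ⟨z, hzy, hzk⟩ := hk
  obtain ⟨w, hwy, hwm⟩ := hm
  rw [mem_ball] at hzy hzk hwy hwm
  have hr : 0 < r := dist_nonneg.trans_lt hzy
  have hcenters : dist ((4 : ℝ) ^ k • e) ((4 : ℝ) ^ m • e) = 4 ^ k - 4 ^ m := by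
    rw [dist_eq_norm, ← sub_smul, norm_smul, he, mul_one,
      Real.norm_of_nonneg (sub_nonneg.2 (pow_le_pow_right₀ (by norm_num) hmk))]
  have hpath := dist_triangle4 ((4 : ℝ) ^ k • e) z w ((4 : ℝ) ^ m • e)
  have hzw := dist_triangle_right z w y
  rw [dist_comm] at hzk
  have hpow : (4 : ℝ) ^ (k - m) < 2 * r + 3 := (four_pow_sub_le hmk).trans_lt (by linarith)
  rwa [Real.lt_logb_iff_rpow_lt (by norm_num) (by positivity), Real.rpow_natCast]

lemma exists_inter_nonempty_mem_Icc {e : E} (he : ‖e‖ = 1) (y : E) (r : ℝ) :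
    ∃ m : ℕ, ∀ k, (ball y r ∩ ball ((4 : ℝ) ^ k • e) 1).Nonempty →
      k ∈ Finset.Icc m (m + ⌊Real.logb 4 (2 * r + 3)⌋₊) := by
  classical
  by_cases hP : ∃ k, (ball y r ∩ ball ((4 : ℝ) ^ k • e) 1).Nonempty
  · refine ⟨Nat.find hP, fun k hk => Finset.mem_Icc.2 ⟨Nat.find_min' hP hk, ?_⟩⟩
    have := Nat.le_floor
      (sub_lt_logb_of_inter_nonempty he (Nat.find_min' hP hk) (Nat.find_spec hP) hk).le
    omega
  · exact ⟨0, fun k hk => absurd ⟨k, hk⟩ hP⟩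

variable [MeasurableSpace E] [BorelSpace E] (μ : Measure E) [μ.IsAddHaarMeasure]

lemma measure_ball_inter_geomBalls_le {e : E} (he : ‖e‖ = 1) (y : E) {r : ℝ} (hr : 0 ≤ r) :
    μ (ball y r ∩ geomBalls e) ≤
      ENNReal.ofReal (Real.logb 4 (2 * r + 3) + 1) * μ (ball 0 1) := by
  obtain ⟨m, hm⟩ := exists_inter_nonempty_mem_Icc he y r
  set K := ⌊Real.logb 4 (2 * r + 3)⌋₊
  have hzero : ∀ k ∉ Finset.Icc m (m + K), μ (ball y r ∩ ball ((4 : ℝ) ^ k • e) 1) = 0 :=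
    fun k hk => by rw [Set.not_nonempty_iff_eq_empty.1 (mt (hm k) hk), measure_empty]
  have hK : (K : ℝ) ≤ Real.logb 4 (2 * r + 3) :=
    Nat.floor_le (Real.logb_nonneg (by norm_num) (by linarith))
  calc μ (ball y r ∩ geomBalls e)
      ≤ ∑' k, μ (ball y r ∩ ball ((4 : ℝ) ^ k • e) 1) := by
        rw [geomBalls, Set.inter_iUnion]
        exact measure_iUnion_le _
    _ = ∑ k ∈ Finset.Icc m (m + K), μ (ball y r ∩ ball ((4 : ℝ) ^ k • e) 1) :=
        tsum_eq_sum hzero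
    _ ≤ ∑ _k ∈ Finset.Icc m (m + K), μ (ball 0 1) := Finset.sum_le_sum fun k _ =>
        (measure_mono Set.inter_subset_right).trans_eq (Measure.addHaar_ball_center μ _ 1)
    _ = ENNReal.ofReal ((K : ℝ) + 1) * μ (ball 0 1) := by
        rw [Finset.sum_const, Nat.card_Icc, nsmul_eq_mul, show m + K + 1 - m = K + 1 by omega,
          ENNReal.ofReal_add (by positivity) zero_le_one]
        simp
    _ ≤ _ := by gcongr

end GeomBalls

lemma logb_four_add_one_le_mul_rpow {γ : ℝ} (hγ : 0 < γ) :
    ∃ C, 0 ≤ C ∧ ∀ r : ℝ, 1 ≤ r → Real.logb 4 (2 * r + 3) + 1 ≤ C * r ^ γ := by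
  have hlog4 : 0 < Real.log 4 := Real.log_pos (by norm_num)
  refine ⟨20 ^ γ / (γ * Real.log 4), by positivity, fun r hr => ?_⟩
  calc Real.logb 4 (2 * r + 3) + 1 = Real.logb 4 (4 * (2 * r + 3)) := by
        rw [Real.logb_mul (by norm_num) (by linarith), Real.logb_self_eq_one (by norm_num),
          add_comm]
    _ ≤ Real.logb 4 (20 * r) := Real.logb_le_logb_of_le (by norm_num) (by positivity) (by linarith)
    _ = Real.log (20 * r) / Real.log 4 := rfl
    _ ≤ (20 * r) ^ γ / γ / Real.log 4 := by
        gcongr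
        exact Real.log_le_rpow_div (by positivity) hγ
    _ = 20 ^ γ / (γ * Real.log 4) * r ^ γ := by
        rw [Real.mul_rpow (by norm_num) (by linarith)]
        field_simp

lemma setLIntegral_nnnorm_indicator_one_rpow {α : Type*} [MeasurableSpace α] (μ : Measure α)
    {s : Set α} (hs : MeasurableSet s) {p : ℝ} (hp : 0 < p) (A : Set α) :
    ∫⁻ x in A, (‖s.indicator (1 : α → ℂ) x‖₊ : ℝ≥0∞) ^ p ∂μ = μ (s ∩ A) := by
  have hpt : ∀ x, (‖s.indicator (1 : α → ℂ) x‖₊ : ℝ≥0∞) ^ p = s.indicator 1 x := by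
    intro x
    by_cases hx : x ∈ s <;> simp [hx, hp]
  simp_rw [hpt]
  rw [lintegral_indicator_one hs, Measure.restrict_apply hs]

section Morrey

variable {n : ℕ} {p β : ℝ} {s : Set (EuclideanSpace ℝ (Fin n))}

lemma morreyA_indicator_one (hp : 0 < p) (hs : MeasurableSet s)
    (y : EuclideanSpace ℝ (Fin n)) (r : ℝ) :
    morreyA n p β (s.indicator 1) y r = ENNReal.ofReal (r ^ (-β)) * volume (s ∩ ball y r) := by
  rw [morreyA, setLIntegral_nnnorm_indicator_one_rpow volume hs hp]

lemma morreyA_indicator_one_le_rpow (hp : 0 < p) (hs : MeasurableSet s)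
    (y : EuclideanSpace ℝ (Fin n)) {r : ℝ} (hr : 0 < r) :
    morreyA n p β (s.indicator 1) y r ≤
      ENNReal.ofReal (r ^ ((n : ℝ) - β)) * volume (ball (0 : EuclideanSpace ℝ (Fin n)) 1) := by
  rw [morreyA_indicator_one hp hs]
  calc ENNReal.ofReal (r ^ (-β)) * volume (s ∩ ball y r)
      ≤ ENNReal.ofReal (r ^ (-β)) * volume (ball y r) := by gcongr; exact Set.inter_subset_right
    _ = ENNReal.ofReal (r ^ (-β) * r ^ n) * volume (ball (0 : EuclideanSpace ℝ (Fin n)) 1) := by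
        rw [Measure.addHaar_ball_of_pos volume y hr, finrank_euclideanSpace, Fintype.card_fin,
          ENNReal.ofReal_mul (by positivity), mul_assoc]
    _ = _ := by
        rw [sub_eq_neg_add, Real.rpow_add hr, Real.rpow_natCast]

lemma exists_morreyA_indicator_geomBalls_le (hp : 0 < p) (hβ : 0 < β)
    {e : EuclideanSpace ℝ (Fin n)} (he : ‖e‖ = 1) :
    ∃ C, 0 ≤ C ∧ ∀ y r, 1 ≤ r → morreyA n p β ((geomBalls e).indicator 1) y r ≤
      ENNReal.ofReal (C * r ^ (-(β / 2))) * volume (ball (0 : EuclideanSpace ℝ (Fin n)) 1) := by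
  obtain ⟨C, hC, hlog⟩ := logb_four_add_one_le_mul_rpow (half_pos hβ)
  refine ⟨C, hC, fun y r hr => ?_⟩
  have hr0 : 0 < r := one_pos.trans_le hr
  rw [morreyA_indicator_one hp (isOpen_geomBalls e).measurableSet, Set.inter_comm]
  calc ENNReal.ofReal (r ^ (-β)) * volume (ball y r ∩ geomBalls e)
      ≤ ENNReal.ofReal (r ^ (-β)) * (ENNReal.ofReal (Real.logb 4 (2 * r + 3) + 1) *
          volume (ball (0 : EuclideanSpace ℝ (Fin n)) 1)) := by
        gcongr
        exact measure_ball_inter_geomBalls_le volume he y hr0.le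
    _ = ENNReal.ofReal (r ^ (-β) * (Real.logb 4 (2 * r + 3) + 1)) *
          volume (ball (0 : EuclideanSpace ℝ (Fin n)) 1) := by
        rw [ENNReal.ofReal_mul (by positivity), mul_assoc]
    _ ≤ ENNReal.ofReal (r ^ (-β) * (C * r ^ (β / 2))) *
          volume (ball (0 : EuclideanSpace ℝ (Fin n)) 1) := by
        gcongr
        exact hlog r hr
    _ = _ := by
        rw [show -(β / 2) = -β + β / 2 by ring, Real.rpow_add hr0]
        ring_nf

lemma morreyNorm_lt_top_of_morreyA_le (hp : 0 < p) {f : EuclideanSpace ℝ (Fin n) → ℂ}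
    {M : ℝ≥0∞} (hM : M ≠ ⊤) (hfM : ∀ y r, 0 < r → morreyA n p β f y r ≤ M) :
    morreyNorm n p β f < ⊤ :=
  (iSup_le fun y => iSup₂_le fun r hr => ENNReal.rpow_le_rpow (hfM y r hr) (by positivity)).trans_lt
    (ENNReal.rpow_lt_top_of_nonneg (by positivity) hM)

lemma morreyNorm_indicator_geomBalls_lt_top (hp : 0 < p) (hβ : 0 < β) (hβn : β < n)
    {e : EuclideanSpace ℝ (Fin n)} (he : ‖e‖ = 1) :
    morreyNorm n p β ((geomBalls e).indicator 1) < ⊤ := by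
  obtain ⟨C, hC0, hC⟩ := exists_morreyA_indicator_geomBalls_le hp hβ he
  refine morreyNorm_lt_top_of_morreyA_le hp
    (M := ENNReal.ofReal (max 1 C) * volume (ball (0 : EuclideanSpace ℝ (Fin n)) 1))
    (ENNReal.mul_ne_top ENNReal.ofReal_ne_top measure_ball_lt_top.ne) fun y r hr => ?_
  rcases le_or_gt r 1 with hr1 | hr1
  · refine (morreyA_indicator_one_le_rpow hp (isOpen_geomBalls e).measurableSet y hr).trans ?_
    gcongr
    exact (Real.rpow_le_one hr.le hr1 (sub_pos.2 hβn).le).trans (le_max_left 1 C)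
  · refine (hC y r hr1.le).trans ?_
    gcongr
    exact (mul_le_of_le_one_right hC0
      (Real.rpow_le_one_of_one_le_of_nonpos hr1.le (by linarith))).trans (le_max_right 1 C)

lemma vanishAtOrigin_indicator_one (hp : 0 < p) (hβn : β < n) (hs : MeasurableSet s) :
    vanishAtOrigin n p β (s.indicator 1) := by
  have hnβ : 0 < (n : ℝ) - β := sub_pos.2 hβn
  have hupper : Tendsto (fun t : ℝ => ENNReal.ofReal (t ^ ((n : ℝ) - β)) *
      volume (ball (0 : EuclideanSpace ℝ (Fin n)) 1)) (𝓝[>] 0) (𝓝 0) := by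
    have h0 : Tendsto (fun t : ℝ => t ^ ((n : ℝ) - β)) (𝓝[>] 0) (𝓝 0) := by
      simpa [Real.zero_rpow hnβ.ne'] using
        (Real.continuousAt_rpow_const 0 _ (Or.inr hnβ.le)).tendsto.mono_left nhdsWithin_le_nhds
    simpa using
      ENNReal.Tendsto.mul_const (ENNReal.tendsto_ofReal h0) (Or.inr measure_ball_lt_top.ne)
  refine tendsto_nhds_bot_mono' hupper fun t => ?_
  refine iSup_le fun y => iSup₂_le fun r hr => iSup_le fun hrt => ?_
  exact (morreyA_indicator_one_le_rpow hp hs y hr).trans (by gcongr)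

lemma vanishAtInfinity_indicator_geomBalls (hp : 0 < p) (hβ : 0 < β)
    {e : EuclideanSpace ℝ (Fin n)} (he : ‖e‖ = 1) :
    vanishAtInfinity n p β ((geomBalls e).indicator 1) := by
  obtain ⟨C, hC0, hC⟩ := exists_morreyA_indicator_geomBalls_le hp hβ he
  have hupper : Tendsto (fun t : ℝ => ENNReal.ofReal (C * t ^ (-(β / 2))) *
      volume (ball (0 : EuclideanSpace ℝ (Fin n)) 1)) atTop (𝓝 0) := by
    have h0 := (tendsto_rpow_neg_atTop (half_pos hβ)).const_mul C
    rw [mul_zero] at h0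
    simpa using
      ENNReal.Tendsto.mul_const (ENNReal.tendsto_ofReal h0) (Or.inr measure_ball_lt_top.ne)
  refine tendsto_nhds_bot_mono hupper ?_
  filter_upwards [eventually_ge_atTop 1] with t ht
  refine iSup_le fun y => iSup₂_le fun r htr => (hC y r (ht.trans htr)).trans ?_
  gcongr ENNReal.ofReal (C * ?_) * _
  exact Real.rpow_le_rpow_of_nonpos (one_pos.trans_le ht) htr (by linarith)

lemma not_vanishTrunc_indicator_one (hp : 0 < p) (hs : MeasurableSet s)
    (hfar : ∀ N : ℝ, ∃ y, N + 1 ≤ ‖y‖ ∧ ball y 1 ⊆ s) :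
    ¬ vanishTrunc n p β (s.indicator 1) := by
  intro htrunc
  set V := volume (ball (0 : EuclideanSpace ℝ (Fin n)) 1)
  have hV0 : V ≠ 0 := (measure_ball_pos volume 0 one_pos).ne'
  obtain ⟨N, hN⟩ := (ENNReal.tendsto_nhds_zero.1 htrunc (V / 2) (ENNReal.half_pos hV0)).exists
  obtain ⟨y, hy, hys⟩ := hfar N
  have hball_far : ball y 1 ⊆ {x | N < ‖x‖} := fun x hx => by
    rw [mem_ball, dist_eq_norm] at hx
    have := norm_sub_norm_le y x
    rw [norm_sub_rev] at this
    show N < ‖x‖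
    linarith
  have hV : V ≤ V / 2 := by
    refine le_trans ?_ hN
    refine le_iSup_of_le y (le_iSup_of_le 1 (le_iSup_of_le one_pos ?_))
    rw [setLIntegral_nnnorm_indicator_one_rpow volume hs hp,
      Set.inter_eq_left.2 hball_far, Set.inter_eq_right.2 hys]
    simp [V, Measure.addHaar_ball_center]
  exact (ENNReal.half_lt_self hV0 measure_ball_lt_top.ne).not_ge hV

end Morrey

theorem exists_vanishing_not_trunc_general (n : ℕ) (p β : ℝ)
    (hp : 1 ≤ p) (hβ : 0 < β) (hβn : β < n) :
    ∃ f : EuclideanSpace ℝ (Fin n) → ℂ, Measurable f ∧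
      morreyNorm n p β f < ⊤ ∧
      vanishAtOrigin n p β f ∧ vanishAtInfinity n p β f ∧
      ¬ vanishTrunc n p β f := by
  have hn : 0 < n := by exact_mod_cast hβ.trans hβn
  have hp0 : 0 < p := one_pos.trans_le hp
  set e : EuclideanSpace ℝ (Fin n) := EuclideanSpace.single ⟨0, hn⟩ 1
  have he : ‖e‖ = 1 := by simp [e]
  have hS := (isOpen_geomBalls e).measurableSet
  exact ⟨(geomBalls e).indicator 1, measurable_const.indicator hS,
    morreyNorm_indicator_geomBalls_lt_top hp0 hβ hβn he,
    vanishAtOrigin_indicator_one hp0 hβn hS,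
    vanishAtInfinity_indicator_geomBalls hp0 hβ he,
    not_vanishTrunc_indicator_one hp0 hS (exists_ball_subset_geomBalls he)⟩

/-- There is a function in `L^{p,β}_0(ℝⁿ) ∩ L^{p,β}_∞(ℝⁿ)` that does not belong to the
truncation subspace `L^{p,β}_*(ℝⁿ)`. -/
theorem exists_vanishing_not_trunc (n : ℕ) (hn : 1 ≤ n) (p β : ℝ)
    (hp : 1 ≤ p) (hβ : 0 < β) (hβn : β < n) :
    ∃ f : EuclideanSpace ℝ (Fin n) → ℂ, Measurable f ∧
      morreyNorm n p β f < ⊤ ∧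
      vanishAtOrigin n p β f ∧ vanishAtInfinity n p β f ∧
      ¬ vanishTrunc n p β f :=
  exists_vanishing_not_trunc_general n p β hp hβ hβn
end

section
/- Let n ≥ 1 be an integer, 1 ≤ p < ∞ and 0 ≤ β < n. If f ∈ L^{p,β}(ℝⁿ) belongs to all three subspaces L^{p,β}_0(ℝⁿ), L^{p,β}_∞(ℝⁿ) and L^{p,β}_*(ℝⁿ), then f has continuous translations in the Morrey norm, i.e. ‖f(· − η) − f‖_{L^{p,β}} → 0 as η → 0 in ℝⁿ; equivalently, L^{p,β}_{0,∞,*}(ℝⁿ) ⊂ 𝕃^{p,β}(ℝⁿ). -/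
open MeasureTheory Metric ENNReal Filter

open Topology

/-! Split the Morrey supremum at a radius `δ`. On balls of radius at most `δ`, vanishing at the
origin makes both `f (· - η)` and `f` uniformly small. On larger balls the weight `r ^ (-β)` is at
most `δ ^ (-β)`; there write `f` as its restriction to a ball `B(0, N)`, which lies in `L^p` by
finiteness of the Morrey norm and so has `L^p`-continuous translations, plus a tail that the
truncation condition makes uniformly small in the Morrey norm. Minkowski's inequality applies
because `morreyA f y r ^ (1 / p)` is `r ^ (-β / p)` times the `L^p` norm of `f` on `B(y, r)`. -/

section Translation

variable {E F : Type*} [NormedAddCommGroup E] [MeasurableSpace E] [BorelSpace E]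
  [NormedAddCommGroup F] {p : ℝ≥0∞}

theorem HasCompactSupport.tendsto_eLpNorm_comp_sub_sub [ProperSpace E] (μ : Measure E)
    [IsFiniteMeasureOnCompacts μ] (hp : p ≠ ∞) {g : E → F} (hcs : HasCompactSupport g)
    (hg : Continuous g) :
    Tendsto (fun η => eLpNorm (fun x => g (x - η) - g x) p μ) (𝓝 0) (𝓝 0) := by
  set K := cthickening 1 (tsupport g)
  have hK : IsCompact K := hcs.isCompact.cthickening
  have hC : μ K ^ (1 / p.toReal) ≠ ∞ :=
    ENNReal.rpow_ne_top_of_nonneg (by positivity) hK.measure_lt_top.ne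
  have hsupp : ∀ η : E, ‖η‖ ≤ 1 → (Function.support fun x => g (x - η)) ⊆ K := fun η hη x hx =>
    mem_cthickening_of_dist_le x (x - η) 1 _ (subset_tsupport g hx) (by simpa [dist_eq_norm])
  have hbound : ∀ c > 0, ∀ᶠ η in 𝓝 (0 : E),
      eLpNorm (fun x => g (x - η) - g x) p μ ≤ ENNReal.ofReal c * μ K ^ (1 / p.toReal) := by
    intro c hc
    obtain ⟨δ, hδ, hgδ⟩ :=
      Metric.uniformContinuous_iff.1 (hcs.uniformContinuous_of_continuous hg) c hc
    filter_upwards [ball_mem_nhds (0 : E) (lt_min hδ one_pos)] with η hη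
    rw [mem_ball_zero_iff, lt_min_iff] at hη
    refine eLpNorm_sub_le_of_dist_bdd μ hp hK.measurableSet hc.le (fun x => (hgδ ?_).le)
      (hsupp η hη.2.le) (by simpa using hsupp 0 (by simp))
    simpa [dist_eq_norm] using hη.1
  have hlim : Tendsto (fun c : ℝ => ENNReal.ofReal c * μ K ^ (1 / p.toReal)) (𝓝[>] 0) (𝓝 0) := by
    simpa using ENNReal.Tendsto.mul_const
      (ENNReal.tendsto_ofReal (tendsto_id.mono_left (nhdsWithin_le_nhds (a := (0 : ℝ)))))
      (Or.inr hC)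
  refine ENNReal.tendsto_nhds_zero.2 fun ε hε => ?_
  obtain ⟨c, hcε, hc⟩ :=
    ((ENNReal.tendsto_nhds_zero.1 hlim ε hε).and self_mem_nhdsWithin).exists
  exact (hbound c hc).mono fun η hη => hη.trans hcε

theorem MemLp.tendsto_eLpNorm_comp_sub_sub [NormedSpace ℝ E] [FiniteDimensional ℝ E]
    [NormedSpace ℝ F] {μ : Measure E} [μ.IsAddHaarMeasure] (hp₁ : 1 ≤ p) (hp : p ≠ ∞) {u : E → F}
    (hu : MemLp u p μ) :
    Tendsto (fun η => eLpNorm (fun x => u (x - η) - u x) p μ) (𝓝 0) (𝓝 0) := by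
  refine ENNReal.tendsto_nhds_zero.2 fun ε hε => ?_
  have hε3 : ε / 3 ≠ 0 := (ENNReal.div_pos hε.ne' (by simp)).ne'
  obtain ⟨g, hcs, hug, hg, -⟩ := hu.exists_hasCompactSupport_eLpNorm_sub_le hp hε3
  have hdiff := hu.aestronglyMeasurable.sub hg.aestronglyMeasurable
  filter_upwards [ENNReal.tendsto_nhds_zero.1 (hcs.tendsto_eLpNorm_comp_sub_sub μ hp hg) _
    (pos_iff_ne_zero.2 hε3)] with η hη
  have htrans := measurePreserving_sub_right μ η
  have hsplit : (fun x => u (x - η) - u x)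
      = ((u - g) ∘ (· - η) + fun x => g (x - η) - g x) - (u - g) := by
    ext x; simp only [Pi.sub_apply, Pi.add_apply, Function.comp_apply]; abel
  calc eLpNorm (fun x => u (x - η) - u x) p μ
      ≤ eLpNorm ((u - g) ∘ (· - η)) p μ + eLpNorm (fun x => g (x - η) - g x) p μ
        + eLpNorm (u - g) p μ := by
        rw [hsplit]
        refine (eLpNorm_sub_le ?_ hdiff hp₁).trans (add_le_add_left
          (eLpNorm_add_le (hdiff.comp_measurePreserving htrans) ?_ hp₁) _)
        · exact (hdiff.comp_measurePreserving htrans).add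
            ((hg.comp (continuous_sub_right η)).sub hg).aestronglyMeasurable
        · exact ((hg.comp (continuous_sub_right η)).sub hg).aestronglyMeasurable
    _ ≤ ε / 3 + ε / 3 + ε / 3 := by
        rw [eLpNorm_comp_measurePreserving hdiff htrans]
        gcongr
    _ = ε := ENNReal.add_thirds ε

end Translation

section Morrey

variable {n : ℕ} {p β : ℝ} {f u v : EuclideanSpace ℝ (Fin n) → ℂ} {y : EuclideanSpace ℝ (Fin n)}
  {r : ℝ}

theorem morreyA_rpow_eq (hp : 0 < p) :
    morreyA n p β f y r ^ (1 / p) =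
      ENNReal.ofReal (r ^ (-β)) ^ (1 / p) * eLpNorm f (.ofReal p) (volume.restrict (ball y r)) := by
  rw [morreyA, ENNReal.mul_rpow_of_nonneg _ _ (by positivity),
    eLpNorm_eq_lintegral_rpow_enorm_toReal (by simpa using hp) ofReal_ne_top,
    toReal_ofReal hp.le]
  simp only [enorm_eq_nnnorm]

theorem morreyA_rpow_add_le (hp : 1 ≤ p) (hu : AEStronglyMeasurable u)
    (hv : AEStronglyMeasurable v) :
    morreyA n p β (u + v) y r ^ (1 / p) ≤
      morreyA n p β u y r ^ (1 / p) + morreyA n p β v y r ^ (1 / p) := by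
  simp only [morreyA_rpow_eq (zero_lt_one.trans_le hp), ← mul_add]
  gcongr
  exact eLpNorm_add_le hu.restrict hv.restrict (by simpa using hp)

theorem morreyA_comp_sub (η : EuclideanSpace ℝ (Fin n)) :
    morreyA n p β (fun x => f (x - η)) y r = morreyA n p β f (y - η) r := by
  have hball : ball y r = (· - η) ⁻¹' ball (y - η) r := by
    ext x; simp [dist_eq_norm]
  rw [morreyA, morreyA, hball, (measurePreserving_sub_right volume η).setLIntegral_comp_preimage_emb
    (measurableEmbedding_subRight η) (fun z => (‖f z‖₊ : ℝ≥0∞) ^ p)]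

theorem morreyA_rpow_comp_sub_sub_le (hp : 1 ≤ p) (hu : AEStronglyMeasurable u)
    (η : EuclideanSpace ℝ (Fin n)) :
    morreyA n p β (fun x => u (x - η) - u x) y r ^ (1 / p) ≤
      morreyA n p β u (y - η) r ^ (1 / p) + morreyA n p β u y r ^ (1 / p) := by
  rw [← morreyA_comp_sub η]
  simp only [morreyA_rpow_eq (zero_lt_one.trans_le hp), ← mul_add]
  gcongr
  exact eLpNorm_sub_le (hu.comp_measurePreserving (measurePreserving_sub_right volume η)).restrict
    hu.restrict (by simpa using hp)

theorem morreyA_indicator (hp : 0 < p) {s : Set (EuclideanSpace ℝ (Fin n))} (hs : MeasurableSet s) :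
    morreyA n p β (s.indicator f) y r =
      ENNReal.ofReal (r ^ (-β)) * ∫⁻ x in ball y r ∩ s, (‖f x‖₊ : ℝ≥0∞) ^ p := by
  have hind : (fun x => (‖s.indicator f x‖₊ : ℝ≥0∞) ^ p) =
      s.indicator fun x => (‖f x‖₊ : ℝ≥0∞) ^ p :=
    Set.indicator_comp_of_zero (g := fun z : ℂ => (‖z‖₊ : ℝ≥0∞) ^ p) (by simp [hp]) |>.symm
  rw [morreyA, hind, lintegral_indicator hs, Measure.restrict_restrict hs, Set.inter_comm]

theorem morreyA_rpow_le_morreyNorm (hr : 0 < r) :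
    morreyA n p β f y r ^ (1 / p) ≤ morreyNorm n p β f :=
  le_iSup₂_of_le y r (le_iSup_of_le hr le_rfl)

theorem morreyA_rpow_le_of_le_radius (hp : 0 < p) (hβ : 0 ≤ β) {δ : ℝ} (hδ : 0 < δ) (hδr : δ ≤ r) :
    morreyA n p β f y r ^ (1 / p) ≤
      ENNReal.ofReal (δ ^ (-β)) ^ (1 / p) * eLpNorm f (.ofReal p) volume := by
  rw [morreyA_rpow_eq hp]
  gcongr ?_ ^ _ * ?_
  · exact ENNReal.ofReal_le_ofReal (Real.rpow_le_rpow_of_nonpos hδ hδr (neg_nonpos.2 hβ))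
  · exact eLpNorm_mono_measure _ Measure.restrict_le_self

theorem morreyA_rpow_comp_sub_sub_le_of_le_radius (hp : 1 ≤ p) (hβ : 0 ≤ β)
    (hf : AEStronglyMeasurable f) {s : Set (EuclideanSpace ℝ (Fin n))} (hs : MeasurableSet s)
    (η : EuclideanSpace ℝ (Fin n)) {δ : ℝ} (hδ : 0 < δ) (hδr : δ ≤ r) :
    morreyA n p β (fun x => f (x - η) - f x) y r ^ (1 / p) ≤
      ENNReal.ofReal (δ ^ (-β)) ^ (1 / p) *
          eLpNorm (fun x => s.indicator f (x - η) - s.indicator f x) (.ofReal p) volume +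
        (morreyA n p β (sᶜ.indicator f) (y - η) r ^ (1 / p) +
          morreyA n p β (sᶜ.indicator f) y r ^ (1 / p)) := by
  have hsplit : (fun x => f (x - η) - f x) =
      (fun x => s.indicator f (x - η) - s.indicator f x) +
        (fun x => sᶜ.indicator f (x - η) - sᶜ.indicator f x) := by
    have hf_eq : ∀ z, f z = s.indicator f z + sᶜ.indicator f z := fun z =>
      (congrFun (Set.indicator_self_add_compl s f) z).symm
    ext x
    rw [Pi.add_apply, hf_eq (x - η), hf_eq x]
    abel
  have hin := hf.indicator hs
  have hout := hf.indicator hs.compl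
  have htrans := measurePreserving_sub_right volume η
  rw [hsplit]
  refine (morreyA_rpow_add_le hp ((hin.comp_measurePreserving htrans).sub hin)
    ((hout.comp_measurePreserving htrans).sub hout)).trans (add_le_add ?_ ?_)
  · exact morreyA_rpow_le_of_le_radius (zero_lt_one.trans_le hp) hβ hδ hδr
  · exact morreyA_rpow_comp_sub_sub_le hp hout η

theorem memLp_indicator_closedBall_of_morreyNorm_lt_top (hp : 0 < p) (hf : AEStronglyMeasurable f)
    (hM : morreyNorm n p β f < ∞) (y : EuclideanSpace ℝ (Fin n)) (N : ℝ) :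
    MemLp ((closedBall y N).indicator f) (.ofReal p) := by
  have hR : 0 < |N| + 1 := by positivity
  have hball : MemLp f (.ofReal p) (volume.restrict (ball y (|N| + 1))) := by
    refine ⟨hf.restrict, ?_⟩
    have := (morreyA_rpow_le_morreyNorm (β := β) (y := y) hR).trans_lt hM
    rw [morreyA_rpow_eq hp] at this
    exact ENNReal.lt_top_of_mul_ne_top_right this.ne
      (ENNReal.rpow_pos (ENNReal.ofReal_pos.2 (Real.rpow_pos_of_pos hR _)) ofReal_ne_top).ne'
  exact (memLp_indicator_iff_restrict measurableSet_closedBall).2 <| hball.mono_measure <|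
    Measure.restrict_mono (closedBall_subset_ball ((le_abs_self N).trans_lt (lt_add_one _))) le_rfl

theorem vanishAtOrigin.exists_morreyA_rpow_le (h0 : vanishAtOrigin n p β f) (hp : 0 < p)
    {ε : ℝ≥0∞} (hε : 0 < ε) :
    ∃ δ > 0, ∀ y r, 0 < r → r ≤ δ → morreyA n p β f y r ^ (1 / p) ≤ ε := by
  have hlim := ((ENNReal.continuous_rpow_const (y := 1 / p)).tendsto 0).comp h0
  rw [Function.comp_def, ENNReal.zero_rpow_of_pos (by positivity)] at hlim
  obtain ⟨δ, hδε, hδ⟩ :=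
    ((ENNReal.tendsto_nhds_zero.1 hlim ε hε).and self_mem_nhdsWithin).exists
  refine ⟨δ, hδ, fun y r hr hrδ => le_trans ?_ hδε⟩
  gcongr
  exact le_iSup₂_of_le y r (le_iSup₂_of_le (κ := fun _ => r ≤ δ) hr hrδ le_rfl)

theorem vanishTrunc.exists_morreyA_rpow_le (hs : vanishTrunc n p β f) (hp : 0 < p)
    {ε : ℝ≥0∞} (hε : 0 < ε) :
    ∃ N : ℝ, ∀ y r, 0 < r → morreyA n p β ((closedBall 0 N)ᶜ.indicator f) y r ^ (1 / p) ≤ ε := by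
  have hlim := ((ENNReal.continuous_rpow_const (y := 1 / p)).tendsto 0).comp hs
  rw [Function.comp_def, ENNReal.zero_rpow_of_pos (by positivity)] at hlim
  obtain ⟨N, hN⟩ := (ENNReal.tendsto_nhds_zero.1 hlim ε hε).exists
  have hcompl : (closedBall (0 : EuclideanSpace ℝ (Fin n)) N)ᶜ = {x | N < ‖x‖} := by
    ext x; simp
  refine ⟨N, fun y r hr => le_trans ?_ hN⟩
  rw [morreyA_indicator hp measurableSet_closedBall.compl, hcompl]
  gcongr
  exact le_iSup₂_of_le y r (le_iSup_of_le hr le_rfl)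

end Morrey

theorem vanishing_subspaces_translation_continuous_general (n : ℕ) (p β : ℝ)
    (hp : 1 ≤ p) (hβ : 0 ≤ β)
    (f : EuclideanSpace ℝ (Fin n) → ℂ) (hf : Measurable f)
    (hfM : morreyNorm n p β f < ⊤)
    (h0 : vanishAtOrigin n p β f)
    (hs : vanishTrunc n p β f) :
    Tendsto (fun η : EuclideanSpace ℝ (Fin n) =>
        morreyNorm n p β (fun x => f (x - η) - f x))
      (nhds 0) (nhds 0) := by
  have hp0 : 0 < p := zero_lt_one.trans_le hp
  have hfa : AEStronglyMeasurable f := hf.aestronglyMeasurable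
  refine ENNReal.tendsto_nhds_zero.2 fun ε hε => ?_
  have hε2 : 0 < ε / 2 := ENNReal.half_pos hε.ne'
  have hε4 : 0 < ε / 2 / 2 := ENNReal.half_pos hε2.ne'
  obtain ⟨δ, hδ, hsmall⟩ := h0.exists_morreyA_rpow_le hp0 hε4
  obtain ⟨N, htail⟩ := hs.exists_morreyA_rpow_le hp0 hε4
  set C := ENNReal.ofReal (δ ^ (-β)) ^ (1 / p)
  have hbulk : Tendsto (fun η => C * eLpNorm (fun x => (closedBall 0 N).indicator f (x - η) -
      (closedBall 0 N).indicator f x) (.ofReal p) volume) (𝓝 0) (𝓝 0) := by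
    simpa using ENNReal.Tendsto.const_mul
      (MemLp.tendsto_eLpNorm_comp_sub_sub (by simpa using hp) ofReal_ne_top
        (memLp_indicator_closedBall_of_morreyNorm_lt_top hp0 hfa hfM 0 N))
      (Or.inr (by finiteness))
  filter_upwards [ENNReal.tendsto_nhds_zero.1 hbulk _ hε2] with η hη
  refine iSup_le fun y => iSup_le fun r => iSup_le fun hr => ?_
  rcases le_total r δ with hrδ | hδr
  · calc _ ≤ morreyA n p β f (y - η) r ^ (1 / p) + morreyA n p β f y r ^ (1 / p) :=
          morreyA_rpow_comp_sub_sub_le hp hfa η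
      _ ≤ ε / 2 / 2 + ε / 2 / 2 := add_le_add (hsmall _ _ hr hrδ) (hsmall _ _ hr hrδ)
      _ ≤ ε := by rw [ENNReal.add_halves]; exact ENNReal.half_le_self
  · calc _ ≤ _ := morreyA_rpow_comp_sub_sub_le_of_le_radius hp hβ hfa measurableSet_closedBall η
          hδ hδr
      _ ≤ ε / 2 + (ε / 2 / 2 + ε / 2 / 2) :=
          add_le_add hη (add_le_add (htail _ _ hr) (htail _ _ hr))
      _ = ε := by rw [ENNReal.add_halves, ENNReal.add_halves]

/-- `L^{p,β}_{0,∞,*}(ℝⁿ) ⊂ 𝕃^{p,β}(ℝⁿ)`: a Morrey function lying in all three vanishing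
subspaces has continuous translations in the Morrey norm. -/
theorem vanishing_subspaces_translation_continuous (n : ℕ) (hn : 1 ≤ n) (p β : ℝ)
    (hp : 1 ≤ p) (hβ : 0 ≤ β) (hβn : β < n)
    (f : EuclideanSpace ℝ (Fin n) → ℂ) (hf : Measurable f)
    (hfM : morreyNorm n p β f < ⊤)
    (h0 : vanishAtOrigin n p β f) (hi : vanishAtInfinity n p β f)
    (hs : vanishTrunc n p β f) :
    Tendsto (fun η : EuclideanSpace ℝ (Fin n) =>
        morreyNorm n p β (fun x => f (x - η) - f x))
      (nhds 0) (nhds 0) :=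
  vanishing_subspaces_translation_continuous_general n p β hp hβ f hf hfM h0 hs
end

section
/- Let n ≥ 1 be an integer, 1 ≤ p < ∞ and 0 < β < n. If f ∈ L^{p,β}(ℝⁿ) has continuous translations in the Morrey norm, i.e. ‖f(· − η) − f‖_{L^{p,β}} → 0 as η → 0 in ℝⁿ, then f belongs to the vanishing-at-origin subspace L^{p,β}_0(ℝⁿ); that is, 𝕃^{p,β}(ℝⁿ) ⊂ L^{p,β}_0(ℝⁿ). -/
open MeasureTheory Metric ENNReal Filter

/-- Jensen-type inequality for averages. -/
lemma jensen_avg {α : Type*} [MeasurableSpace α] (μ : Measure α) (s : Set α) {p : ℝ}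
    (hp : 1 ≤ p) {h : α → ℝ≥0∞} (hm : AEMeasurable h (μ.restrict s))
    (h0 : μ s ≠ 0) (hT : μ s ≠ ⊤) :
    ((μ s)⁻¹ * ∫⁻ a in s, h a ∂μ) ^ p ≤ (μ s)⁻¹ * ∫⁻ a in s, h a ^ p ∂μ := by
  have hp0 : (0:ℝ) < p := lt_of_lt_of_le zero_lt_one hp
  rcases eq_or_lt_of_le hp with h1 | h1
  · simp [← h1]
  · set q : ℝ := Real.conjExponent p with hq
    have hpq : p.HolderConjugate q := Real.HolderConjugate.conjExponent h1
    have hiq : 1 / q = 1 - 1 / p := by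
      have := hpq.inv_add_inv_eq_one
      rw [one_div, one_div]; linarith [this]
    have hI : ∫⁻ a in s, h a ∂μ ≤
        (∫⁻ a in s, h a ^ p ∂μ) ^ (1/p) * (μ s) ^ (1/q) := by
      have key := ENNReal.lintegral_mul_le_Lp_mul_Lq (μ.restrict s) hpq hm
        (aemeasurable_const (b := (1:ℝ≥0∞)))
      simpa [Measure.restrict_apply_univ] using key
    set c := μ s
    set J := ∫⁻ a in s, h a ^ p ∂μ
    calc (c⁻¹ * ∫⁻ a in s, h a ∂μ) ^ p
        ≤ (c⁻¹ * (J ^ (1/p) * c ^ (1/q))) ^ p := by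
          gcongr
      _ = (c⁻¹) ^ p * ((J ^ (1/p)) ^ p * (c ^ (1/q)) ^ p) := by
          rw [ENNReal.mul_rpow_of_nonneg _ _ hp0.le, ENNReal.mul_rpow_of_nonneg _ _ hp0.le]
      _ = (c⁻¹) ^ p * (J * c ^ (p - 1)) := by
          rw [← ENNReal.rpow_mul J, ← ENNReal.rpow_mul c,
            one_div_mul_cancel hp0.ne', ENNReal.rpow_one]
          congr 2
          rw [hiq]; field_simp
      _ = ((c⁻¹) ^ p * c ^ (p - 1)) * J := by ring
      _ = c⁻¹ * J := by
          rw [ENNReal.inv_rpow, ← ENNReal.rpow_neg, ← ENNReal.rpow_add _ _ h0 hT,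
            show -p + (p - 1) = -1 by ring, ENNReal.rpow_neg_one]

lemma setLIntegral_le_morrey (n : ℕ) {p : ℝ} (β : ℝ) (hp0 : 0 < p)
    (g : EuclideanSpace ℝ (Fin n) → ℂ) (y : EuclideanSpace ℝ (Fin n)) {r : ℝ} (hr : 0 < r) :
    ∫⁻ x in ball y r, (‖g x‖₊ : ℝ≥0∞) ^ p
      ≤ ENNReal.ofReal (r ^ β) * (morreyNorm n p β g) ^ p := by
  have h1 : (morreyA n p β g y r) ^ (1/p) ≤ morreyNorm n p β g :=
    le_iSup_of_le y <| le_iSup_of_le r <| le_iSup_of_le hr le_rfl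
  have h2 : morreyA n p β g y r ≤ (morreyNorm n p β g) ^ p := by
    have h3 := ENNReal.rpow_le_rpow h1 hp0.le
    rwa [← ENNReal.rpow_mul, one_div_mul_cancel hp0.ne', ENNReal.rpow_one] at h3
  have hprod : ENNReal.ofReal (r ^ β) * ENNReal.ofReal (r ^ (-β)) = 1 := by
    rw [← ENNReal.ofReal_mul (by positivity), ← Real.rpow_add hr, add_neg_cancel,
      Real.rpow_zero, ENNReal.ofReal_one]
  calc ∫⁻ x in ball y r, (‖g x‖₊ : ℝ≥0∞) ^ p
      = (ENNReal.ofReal (r ^ β) * ENNReal.ofReal (r ^ (-β))) *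
        ∫⁻ x in ball y r, (‖g x‖₊ : ℝ≥0∞) ^ p := by rw [hprod, one_mul]
    _ = ENNReal.ofReal (r ^ β) * morreyA n p β g y r := by rw [morreyA, mul_assoc]
    _ ≤ ENNReal.ofReal (r ^ β) * (morreyNorm n p β g) ^ p := mul_le_mul_right h2 _

lemma key_estimate (n : ℕ) (hn : 1 ≤ n) {p β : ℝ} (hp : 1 ≤ p) (hβ : 0 < β)
    (f : EuclideanSpace ℝ (Fin n) → ℂ) (hf : Measurable f)
    {δ : ℝ} (hδpos : 0 < δ) (ε₀ : ℝ≥0∞)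
    (hδ : ∀ η : EuclideanSpace ℝ (Fin n), dist η 0 < δ →
      morreyNorm n p β (fun x => f (x - η) - f x) ≤ ε₀)
    (y : EuclideanSpace ℝ (Fin n)) {r : ℝ} (hr : 0 < r) :
    morreyA n p β f y r ≤ 2 ^ p * ε₀ ^ p +
      (2 ^ p * ((volume (ball (0 : EuclideanSpace ℝ (Fin n)) δ))⁻¹ * ENNReal.ofReal (δ ^ β) *
        (morreyNorm n p β f) ^ p * volume (ball (0 : EuclideanSpace ℝ (Fin n)) 1))) *
      ENNReal.ofReal (r ^ ((n : ℝ) - β)) := by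
  have hp0 : (0:ℝ) < p := lt_of_lt_of_le zero_lt_one hp
  haveI : Nontrivial (EuclideanSpace ℝ (Fin n)) := by
    apply Module.nontrivial_of_finrank_pos (R := ℝ)
    rw [finrank_euclideanSpace_fin]
    omega
  set c := volume (ball (0 : EuclideanSpace ℝ (Fin n)) δ) with hcdef
  have hc0 : c ≠ 0 := (measure_ball_pos _ _ hδpos).ne'
  have hcT : c ≠ ⊤ := measure_ball_lt_top.ne
  have hcinvT : c⁻¹ ≠ ⊤ := ENNReal.inv_ne_top.mpr hc0
  have h2T : (2:ℝ≥0∞) ^ p ≠ ⊤ := ENNReal.rpow_ne_top_of_nonneg hp0.le (by norm_num)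
  set A := morreyNorm n p β f with hAdef
  set D : EuclideanSpace ℝ (Fin n) → ℝ≥0∞ := fun x =>
    c⁻¹ * ∫⁻ η in ball (0 : EuclideanSpace ℝ (Fin n)) δ, (‖f x - f (x - η)‖₊ : ℝ≥0∞) with hDdef
  set G : EuclideanSpace ℝ (Fin n) → ℝ≥0∞ := fun x =>
    c⁻¹ * ∫⁻ η in ball (0 : EuclideanSpace ℝ (Fin n)) δ, (‖f (x - η)‖₊ : ℝ≥0∞) with hGdef
  have hmeasD2 : Measurable (fun q : (EuclideanSpace ℝ (Fin n)) × (EuclideanSpace ℝ (Fin n)) =>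
      (‖f q.1 - f (q.1 - q.2)‖₊ : ℝ≥0∞)) := by fun_prop
  have hmeasG2 : Measurable (fun q : (EuclideanSpace ℝ (Fin n)) × (EuclideanSpace ℝ (Fin n)) =>
      (‖f (q.1 - q.2)‖₊ : ℝ≥0∞)) := by fun_prop
  have hDmeas : Measurable D :=
    measurable_const.mul (Measurable.lintegral_prod_right' hmeasD2)
  have hsum : ∀ x : EuclideanSpace ℝ (Fin n), (‖f x‖₊ : ℝ≥0∞) ≤ D x + G x := by
    intro x
    have hg1 : Measurable (fun η : EuclideanSpace ℝ (Fin n) =>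
        (‖f x - f (x - η)‖₊ : ℝ≥0∞)) := by fun_prop
    have h2 : c * (‖f x‖₊ : ℝ≥0∞) ≤
        (∫⁻ η in ball (0 : EuclideanSpace ℝ (Fin n)) δ, (‖f x - f (x - η)‖₊ : ℝ≥0∞)) +
        ∫⁻ η in ball (0 : EuclideanSpace ℝ (Fin n)) δ, (‖f (x - η)‖₊ : ℝ≥0∞) := by
      rw [← lintegral_add_left hg1 (fun η => (‖f (x - η)‖₊ : ℝ≥0∞))]
      calc c * (‖f x‖₊ : ℝ≥0∞)
          = ∫⁻ _ in ball (0 : EuclideanSpace ℝ (Fin n)) δ, (‖f x‖₊ : ℝ≥0∞) := by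
            rw [setLIntegral_const, mul_comm]
        _ ≤ _ := by
            apply lintegral_mono
            intro η
            calc (‖f x‖₊ : ℝ≥0∞) = (‖(f x - f (x - η)) + f (x - η)‖₊ : ℝ≥0∞) := by
                  rw [sub_add_cancel]
              _ ≤ _ := by
                  simpa using ENNReal.coe_le_coe.mpr (nnnorm_add_le (f x - f (x - η)) (f (x - η)))
    calc (‖f x‖₊ : ℝ≥0∞) = c⁻¹ * (c * (‖f x‖₊ : ℝ≥0∞)) := by
          rw [← mul_assoc, ENNReal.inv_mul_cancel hc0 hcT, one_mul]
      _ ≤ c⁻¹ * _ := mul_le_mul_right h2 _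
      _ = D x + G x := by rw [mul_add]
  have hDG : ∀ x : EuclideanSpace ℝ (Fin n),
      ((‖f x‖₊ : ℝ≥0∞)) ^ p ≤ 2 ^ p * ((D x) ^ p + (G x) ^ p) := by
    intro x
    calc ((‖f x‖₊ : ℝ≥0∞)) ^ p ≤ (D x + G x) ^ p := ENNReal.rpow_le_rpow (hsum x) hp0.le
      _ ≤ (2 * max (D x) (G x)) ^ p := by
          apply ENNReal.rpow_le_rpow _ hp0.le
          rw [two_mul]
          exact add_le_add (le_max_left _ _) (le_max_right _ _)
      _ = 2 ^ p * (max (D x) (G x)) ^ p := ENNReal.mul_rpow_of_nonneg _ _ hp0.le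
      _ ≤ 2 ^ p * ((D x) ^ p + (G x) ^ p) := by
          apply mul_le_mul_right
          rcases le_total (D x) (G x) with h | h
          · rw [max_eq_right h]; exact le_add_self
          · rw [max_eq_left h]; exact le_add_right le_rfl
  have hD1 : ∀ x : EuclideanSpace ℝ (Fin n), (D x) ^ p ≤
      c⁻¹ * ∫⁻ η in ball (0 : EuclideanSpace ℝ (Fin n)) δ,
        ((‖f x - f (x - η)‖₊ : ℝ≥0∞)) ^ p := by
    intro x
    have hg1 : Measurable (fun η : EuclideanSpace ℝ (Fin n) =>
        (‖f x - f (x - η)‖₊ : ℝ≥0∞)) := by fun_prop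
    exact jensen_avg volume (ball (0 : EuclideanSpace ℝ (Fin n)) δ) hp hg1.aemeasurable hc0 hcT
  have hG1 : ∀ x : EuclideanSpace ℝ (Fin n),
      (G x) ^ p ≤ c⁻¹ * ENNReal.ofReal (δ ^ β) * A ^ p := by
    intro x
    have hg2 : Measurable (fun η : EuclideanSpace ℝ (Fin n) =>
        (‖f (x - η)‖₊ : ℝ≥0∞)) := by fun_prop
    have j := jensen_avg volume (ball (0 : EuclideanSpace ℝ (Fin n)) δ) hp
      hg2.aemeasurable hc0 hcT
    have hcv : ∫⁻ η in ball (0 : EuclideanSpace ℝ (Fin n)) δ, ((‖f (x - η)‖₊ : ℝ≥0∞)) ^ p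
        = ∫⁻ z in ball x δ, ((‖f z‖₊ : ℝ≥0∞)) ^ p := by
      have hmp : MeasurePreserving (fun η : EuclideanSpace ℝ (Fin n) => x - η) volume volume :=
        Measure.measurePreserving_sub_left volume x
      have hemb : MeasurableEmbedding (fun η : EuclideanSpace ℝ (Fin n) => x - η) :=
        (MeasurableEquiv.subLeft x).measurableEmbedding
      have hpre : (fun η : EuclideanSpace ℝ (Fin n) => x - η) ⁻¹' (ball x δ)
          = ball (0 : EuclideanSpace ℝ (Fin n)) δ := by
        ext η
        simp [mem_ball, dist_eq_norm]
      rw [← hpre, hmp.setLIntegral_comp_preimage_emb hemb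
        (fun z => ((‖f z‖₊ : ℝ≥0∞)) ^ p) (ball x δ)]
    calc (G x) ^ p
        ≤ c⁻¹ * ∫⁻ η in ball (0 : EuclideanSpace ℝ (Fin n)) δ,
            ((‖f (x - η)‖₊ : ℝ≥0∞)) ^ p := j
      _ = c⁻¹ * ∫⁻ z in ball x δ, ((‖f z‖₊ : ℝ≥0∞)) ^ p := by rw [hcv]
      _ ≤ c⁻¹ * (ENNReal.ofReal (δ ^ β) * A ^ p) :=
          mul_le_mul_right (setLIntegral_le_morrey n β hp0 f x hδpos) _
      _ = c⁻¹ * ENNReal.ofReal (δ ^ β) * A ^ p := by rw [mul_assoc]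
  have hDint : ∫⁻ x in ball y r, (D x) ^ p ≤ ENNReal.ofReal (r ^ β) * ε₀ ^ p := by
    have hswap : ∫⁻ x in ball y r, ∫⁻ η in ball (0 : EuclideanSpace ℝ (Fin n)) δ,
          ((‖f x - f (x - η)‖₊ : ℝ≥0∞)) ^ p
        = ∫⁻ η in ball (0 : EuclideanSpace ℝ (Fin n)) δ, ∫⁻ x in ball y r,
          ((‖f x - f (x - η)‖₊ : ℝ≥0∞)) ^ p :=
      lintegral_lintegral_swap ((hmeasD2.pow_const p).aemeasurable)
    calc ∫⁻ x in ball y r, (D x) ^ p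
        ≤ ∫⁻ x in ball y r, c⁻¹ * ∫⁻ η in ball (0 : EuclideanSpace ℝ (Fin n)) δ,
            ((‖f x - f (x - η)‖₊ : ℝ≥0∞)) ^ p := lintegral_mono hD1
      _ = c⁻¹ * ∫⁻ x in ball y r, ∫⁻ η in ball (0 : EuclideanSpace ℝ (Fin n)) δ,
            ((‖f x - f (x - η)‖₊ : ℝ≥0∞)) ^ p := lintegral_const_mul' _ _ hcinvT
      _ = c⁻¹ * ∫⁻ η in ball (0 : EuclideanSpace ℝ (Fin n)) δ, ∫⁻ x in ball y r,
            ((‖f x - f (x - η)‖₊ : ℝ≥0∞)) ^ p := by rw [hswap]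
      _ ≤ c⁻¹ * ∫⁻ _ in ball (0 : EuclideanSpace ℝ (Fin n)) δ,
            ENNReal.ofReal (r ^ β) * ε₀ ^ p := by
          apply mul_le_mul_right
          apply setLIntegral_mono measurable_const
          intro η hη
          calc ∫⁻ x in ball y r, ((‖f x - f (x - η)‖₊ : ℝ≥0∞)) ^ p
              = ∫⁻ x in ball y r, ((‖f (x - η) - f x‖₊ : ℝ≥0∞)) ^ p := by
                apply lintegral_congr
                intro x
                rw [← neg_sub (f x) (f (x - η)), nnnorm_neg]
            _ ≤ ENNReal.ofReal (r ^ β) * (morreyNorm n p β (fun x => f (x - η) - f x)) ^ p :=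
                setLIntegral_le_morrey n β hp0 _ y hr
            _ ≤ ENNReal.ofReal (r ^ β) * ε₀ ^ p := by
                apply mul_le_mul_right
                exact ENNReal.rpow_le_rpow (hδ η (mem_ball.mp hη)) hp0.le
      _ = c⁻¹ * (c * (ENNReal.ofReal (r ^ β) * ε₀ ^ p)) := by
          rw [setLIntegral_const, mul_comm (ENNReal.ofReal (r ^ β) * ε₀ ^ p) c]
      _ = ENNReal.ofReal (r ^ β) * ε₀ ^ p := by
          rw [← mul_assoc, ENNReal.inv_mul_cancel hc0 hcT, one_mul]
  have hGint : ∫⁻ x in ball y r, (G x) ^ p ≤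
      (c⁻¹ * ENNReal.ofReal (δ ^ β) * A ^ p) *
        (ENNReal.ofReal (r ^ (n : ℕ)) *
          volume (ball (0 : EuclideanSpace ℝ (Fin n)) 1)) := by
    calc ∫⁻ x in ball y r, (G x) ^ p
        ≤ ∫⁻ _ in ball y r, (c⁻¹ * ENNReal.ofReal (δ ^ β) * A ^ p) := lintegral_mono hG1
      _ = (c⁻¹ * ENNReal.ofReal (δ ^ β) * A ^ p) * volume (ball y r) := setLIntegral_const _ _
      _ = _ := by
          rw [Measure.addHaar_ball volume y hr.le, finrank_euclideanSpace_fin]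
  have hr1 : ENNReal.ofReal (r ^ (-β)) * ENNReal.ofReal (r ^ β) = 1 := by
    rw [← ENNReal.ofReal_mul (by positivity), ← Real.rpow_add hr, neg_add_cancel,
      Real.rpow_zero, ENNReal.ofReal_one]
  have hr2 : ENNReal.ofReal (r ^ (-β)) * ENNReal.ofReal (r ^ (n : ℕ)) =
      ENNReal.ofReal (r ^ ((n : ℝ) - β)) := by
    rw [← ENNReal.ofReal_mul (by positivity), ← Real.rpow_natCast r n, ← Real.rpow_add hr]
    ring_nf
  have hbody : ∫⁻ x in ball y r, ((‖f x‖₊ : ℝ≥0∞)) ^ p ≤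
      2 ^ p * ((∫⁻ x in ball y r, (D x) ^ p) + ∫⁻ x in ball y r, (G x) ^ p) := by
    calc ∫⁻ x in ball y r, ((‖f x‖₊ : ℝ≥0∞)) ^ p
        ≤ ∫⁻ x in ball y r, 2 ^ p * ((D x) ^ p + (G x) ^ p) := lintegral_mono hDG
      _ = 2 ^ p * ∫⁻ x in ball y r, ((D x) ^ p + (G x) ^ p) := lintegral_const_mul' _ _ h2T
      _ = _ := by rw [lintegral_add_left (hDmeas.pow_const p)]
  calc morreyA n p β f y r
      = ENNReal.ofReal (r ^ (-β)) * ∫⁻ x in ball y r, ((‖f x‖₊ : ℝ≥0∞)) ^ p := rfl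
    _ ≤ ENNReal.ofReal (r ^ (-β)) *
        (2 ^ p * ((ENNReal.ofReal (r ^ β) * ε₀ ^ p) +
          (c⁻¹ * ENNReal.ofReal (δ ^ β) * A ^ p) *
            (ENNReal.ofReal (r ^ (n : ℕ)) *
              volume (ball (0 : EuclideanSpace ℝ (Fin n)) 1)))) := by
        apply mul_le_mul_right
        exact le_trans hbody (mul_le_mul_right (add_le_add hDint hGint) _)
    _ = 2 ^ p * ((ENNReal.ofReal (r ^ (-β)) * ENNReal.ofReal (r ^ β)) * ε₀ ^ p) +
        (2 ^ p * (c⁻¹ * ENNReal.ofReal (δ ^ β) * A ^ p *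
          volume (ball (0 : EuclideanSpace ℝ (Fin n)) 1))) *
          (ENNReal.ofReal (r ^ (-β)) * ENNReal.ofReal (r ^ (n : ℕ))) := by ring
    _ = _ := by rw [hr1, hr2, one_mul]

/-- `𝕃^{p,β}(ℝⁿ) ⊂ L^{p,β}_0(ℝⁿ)`: a Morrey function whose translations are continuous in
the Morrey norm belongs to the vanishing-at-origin subspace. -/
theorem translation_continuous_vanishAtOrigin (n : ℕ) (hn : 1 ≤ n) (p β : ℝ)
    (hp : 1 ≤ p) (hβ : 0 < β) (hβn : β < n)
    (f : EuclideanSpace ℝ (Fin n) → ℂ) (hf : Measurable f)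
    (hfM : morreyNorm n p β f < ⊤)
    (htrans : Tendsto (fun η : EuclideanSpace ℝ (Fin n) =>
        morreyNorm n p β (fun x => f (x - η) - f x))
      (nhds 0) (nhds 0)) :
    vanishAtOrigin n p β f := by
  have hp0 : (0:ℝ) < p := lt_of_lt_of_le zero_lt_one hp
  have hnβ : (0:ℝ) < (n:ℝ) - β := sub_pos.mpr hβn
  rw [vanishAtOrigin, ENNReal.tendsto_nhds_zero]
  intro ε hε
  set ε' : ℝ≥0∞ := min ε 1 with hε'def
  have hε'0 : (0:ℝ≥0∞) < ε' := lt_min hε zero_lt_one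
  have hε'T : ε' ≠ ⊤ := ((min_le_right ε 1).trans_lt ENNReal.one_lt_top).ne
  have h2ne0 : (2:ℝ≥0∞) ^ p ≠ 0 := (ENNReal.rpow_pos (by norm_num) (by norm_num)).ne'
  have h2T : (2:ℝ≥0∞) ^ p ≠ ⊤ := ENNReal.rpow_ne_top_of_nonneg hp0.le (by norm_num)
  set ε₀ : ℝ≥0∞ := (ε' / (2 * 2 ^ p)) ^ (1/p) with hε₀def
  have hbase0 : ε' / (2 * 2 ^ p) ≠ 0 := by
    simp only [ne_eq, ENNReal.div_eq_zero_iff, not_or]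
    exact ⟨hε'0.ne', ENNReal.mul_ne_top (by norm_num) h2T⟩
  have hbaseT : ε' / (2 * 2 ^ p) ≠ ⊤ :=
    (ENNReal.div_lt_top hε'T (mul_ne_zero (by norm_num) h2ne0)).ne
  have hε₀pos : 0 < ε₀ := ENNReal.rpow_pos (pos_iff_ne_zero.mpr hbase0) hbaseT
  have hε₀p : 2 ^ p * ε₀ ^ p ≤ ε' / 2 := by
    have h1 : ε₀ ^ p = ε' / (2 * 2 ^ p) := by
      rw [hε₀def, ← ENNReal.rpow_mul, one_div_mul_cancel hp0.ne', ENNReal.rpow_one]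
    have h2 : ε' / (2 * 2 ^ p) = (ε' / 2) / 2 ^ p := by
      rw [div_eq_mul_inv, ENNReal.mul_inv (Or.inl (by norm_num)) (Or.inl (by norm_num)),
        ← mul_assoc, div_eq_mul_inv, div_eq_mul_inv]
    rw [h1, h2]
    exact ENNReal.mul_div_le
  obtain ⟨δ, hδpos, hδ⟩ : ∃ δ > 0, ∀ η : EuclideanSpace ℝ (Fin n), dist η 0 < δ →
      morreyNorm n p β (fun x => f (x - η) - f x) ≤ ε₀ := by
    have h := (ENNReal.tendsto_nhds_zero.mp htrans) ε₀ hε₀pos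
    rw [Metric.eventually_nhds_iff] at h
    obtain ⟨δ, hδ', h⟩ := h
    exact ⟨δ, hδ', fun η hη => h hη⟩
  set C : ℝ≥0∞ := 2 ^ p * ((volume (ball (0 : EuclideanSpace ℝ (Fin n)) δ))⁻¹ *
    ENNReal.ofReal (δ ^ β) * (morreyNorm n p β f) ^ p *
    volume (ball (0 : EuclideanSpace ℝ (Fin n)) 1)) with hCdef
  have hCT : C ≠ ⊤ := by
    apply ENNReal.mul_ne_top h2T
    apply ENNReal.mul_ne_top
    apply ENNReal.mul_ne_top
    apply ENNReal.mul_ne_top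
    · exact ENNReal.inv_ne_top.mpr (measure_ball_pos _ _ hδpos).ne'
    · exact ENNReal.ofReal_ne_top
    · exact ENNReal.rpow_ne_top_of_nonneg hp0.le hfM.ne
    · exact measure_ball_lt_top.ne
  have h3 : Tendsto (fun t : ℝ => ENNReal.ofReal (t ^ ((n:ℝ) - β)))
      (nhdsWithin 0 (Set.Ioi 0)) (nhds 0) := by
    have h1 : Tendsto (fun t : ℝ => t ^ ((n:ℝ) - β)) (nhds 0) (nhds 0) := by
      have h2 := (Real.continuousAt_rpow_const 0 ((n:ℝ) - β) (Or.inr hnβ.le)).tendsto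
      rwa [Real.zero_rpow hnβ.ne'] at h2
    have h4 := ENNReal.tendsto_ofReal h1
    rw [ENNReal.ofReal_zero] at h4
    exact h4.mono_left nhdsWithin_le_nhds
  have htend : Tendsto (fun t : ℝ => C * ENNReal.ofReal (t ^ ((n:ℝ) - β)))
      (nhdsWithin 0 (Set.Ioi 0)) (nhds 0) := by
    have h5 := ENNReal.Tendsto.const_mul h3 (Or.inr hCT)
    simpa using h5
  have hhalf : (0:ℝ≥0∞) < ε' / 2 := ENNReal.div_pos hε'0.ne' (by norm_num)
  have hev : ∀ᶠ t in nhdsWithin (0:ℝ) (Set.Ioi 0),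
      C * ENNReal.ofReal (t ^ ((n:ℝ) - β)) ≤ ε' / 2 :=
    (htend.eventually_lt_const hhalf).mono fun t ht => ht.le
  filter_upwards [hev] with t hevt
  refine iSup_le fun y => iSup_le fun r => iSup_le fun hr => iSup_le fun hrt => ?_
  calc morreyA n p β f y r
      ≤ 2 ^ p * ε₀ ^ p + C * ENNReal.ofReal (r ^ ((n:ℝ) - β)) :=
        key_estimate n hn hp hβ f hf hδpos ε₀ hδ y hr
    _ ≤ ε' / 2 + C * ENNReal.ofReal (t ^ ((n:ℝ) - β)) :=
        add_le_add hε₀p (mul_le_mul_right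
          (ENNReal.ofReal_le_ofReal (Real.rpow_le_rpow hr.le hrt hnβ.le)) C)
    _ ≤ ε' / 2 + ε' / 2 := add_le_add le_rfl hevt
    _ = ε' := ENNReal.add_halves ε'
    _ ≤ ε := min_le_left _ _
end

section
/- Let n ≥ 1 be an integer, 1 ≤ p < ∞ and 0 < β < n. Suppose f : ℝⁿ → ℂ is bounded and uniformly continuous and belongs to both the vanishing-at-origin subspace L^{p,β}_0(ℝⁿ) and the vanishing-at-infinity subspace L^{p,β}_∞(ℝⁿ). Let ψ ∈ C_c^∞(ℝⁿ) with ∫_{ℝⁿ} ψ(x) dx = 1, and set ψ_l(x) = l^{−n} ψ(x/l) for l > 0. Then the mollifications converge to f in the Morrey norm: ‖f ∗ ψ_l − f‖_{L^{p,β}} → 0 as l → 0⁺. -/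
open MeasureTheory Metric ENNReal Filter

private lemma holder_step {α : Type*} [MeasurableSpace α] (μ : Measure α) {p : ℝ} (hp : 1 ≤ p)
    {w g : α → ℝ≥0∞} (hw : AEMeasurable w μ) (hg : AEMeasurable g μ) :
    (∫⁻ a, w a * g a ∂μ) ^ p ≤ (∫⁻ a, w a ∂μ) ^ (p - 1) * ∫⁻ a, w a * g a ^ p ∂μ := by
  rcases eq_or_lt_of_le hp with h | h
  · simp [← h]
  · set q : ℝ := p / (p - 1) with hqdef
    have hpq : p.HolderConjugate q := Real.HolderConjugate.conjExponent h
    have hp0 : p ≠ 0 := hpq.ne_zero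
    have hq0 : q ≠ 0 := hpq.symm.ne_zero
    have hppos : (0:ℝ) ≤ p := le_of_lt hpq.pos
    have key := ENNReal.lintegral_mul_le_Lp_mul_Lq μ hpq.symm
      (hw.pow_const (1/q)) ((hw.pow_const (1/p)).mul hg)
    have e1 : ∀ a, w a ^ (1/q) * (w a ^ (1/p) * g a) = w a * g a := by
      intro a
      rw [← mul_assoc, ← ENNReal.rpow_add_of_nonneg _ _ hpq.symm.one_div_nonneg
        hpq.one_div_nonneg]
      have h1 : 1/q + 1/p = 1 := by
        rw [one_div, one_div]; exact hpq.symm.inv_add_inv_eq_one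
      rw [h1, ENNReal.rpow_one]
    have e2 : ∀ x : ℝ≥0∞, (x ^ (1/q)) ^ q = x := by
      intro x
      rw [← ENNReal.rpow_mul, one_div, inv_mul_cancel₀ hq0, ENNReal.rpow_one]
    have e3 : ∀ a, (w a ^ (1/p) * g a) ^ p = w a * g a ^ p := by
      intro a
      rw [ENNReal.mul_rpow_of_nonneg _ _ hppos, ← ENNReal.rpow_mul, one_div,
        inv_mul_cancel₀ hp0, ENNReal.rpow_one]
    simp only [Pi.mul_apply, e1, e2, e3] at key
    have key2 := ENNReal.rpow_le_rpow key hppos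
    rw [ENNReal.mul_rpow_of_nonneg _ _ hppos, ← ENNReal.rpow_mul, ← ENNReal.rpow_mul] at key2
    have h2 : 1/q * p = p - 1 := by
      rw [hqdef, one_div_div, div_mul_cancel₀ _ hp0]
    have h3 : 1/p * p = 1 := by
      rw [one_div, inv_mul_cancel₀ hp0]
    rwa [h2, h3, ENNReal.rpow_one] at key2

private lemma lintegral_ball_translate {n : ℕ} (G : EuclideanSpace ℝ (Fin n) → ℝ≥0∞)
    (hG : Measurable G) (y z : EuclideanSpace ℝ (Fin n)) (r : ℝ) :
    ∫⁻ x in ball y r, G (x - z) = ∫⁻ x in ball (y - z) r, G x := by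
  rw [← lintegral_indicator measurableSet_ball, ← lintegral_indicator measurableSet_ball]
  have e : ∀ x, (ball y r).indicator (fun u => G (u - z)) x
      = (ball (y - z) r).indicator G (x + -z) := by
    intro x
    have hm : x + -z ∈ ball (y - z) r ↔ x ∈ ball y r := by
      simp only [mem_ball, dist_eq_norm]
      constructor <;> intro hx <;> [skip; skip] <;>
        · convert hx using 2 <;> abel
    by_cases hx : x ∈ ball y r
    · rw [Set.indicator_of_mem hx, Set.indicator_of_mem (hm.mpr hx), sub_eq_add_neg]
    · rw [Set.indicator_of_notMem hx, Set.indicator_of_notMem (fun c => hx (hm.mp c))]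
  simp_rw [e]
  exact lintegral_add_right_eq_self _ (-z)

private lemma conv_morrey_bound {n : ℕ} {p : ℝ} (hp : 1 ≤ p)
    (f : EuclideanSpace ℝ (Fin n) → ℂ) (hf : Measurable f)
    (w : EuclideanSpace ℝ (Fin n) → ℝ) (hw : Continuous w) (hwc : HasCompactSupport w)
    (y : EuclideanSpace ℝ (Fin n)) (r : ℝ) (D : ℝ≥0∞)
    (hD : ∀ y', ∫⁻ x in ball y' r, (‖f x‖₊ : ℝ≥0∞) ^ p ≤ D) :
    ∫⁻ x in ball y r, (‖(∫ z, w z • f (x - z))‖₊ : ℝ≥0∞) ^ p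
      ≤ (∫⁻ z, (‖w z‖₊ : ℝ≥0∞)) ^ p * D := by
  have hp0 : (0:ℝ) ≤ p := le_trans zero_le_one hp
  set W : ℝ≥0∞ := ∫⁻ z, (‖w z‖₊ : ℝ≥0∞) with hWdef
  have hWfin : W ≠ ⊤ := (hw.integrable_of_hasCompactSupport hwc).2.ne
  have hwm : Measurable w := hw.measurable
  -- pointwise bound
  have hpt : ∀ x : EuclideanSpace ℝ (Fin n),
      (‖(∫ z, w z • f (x - z))‖₊ : ℝ≥0∞) ^ p
        ≤ W ^ (p - 1) * ∫⁻ z, (‖w z‖₊ : ℝ≥0∞) * (‖f (x - z)‖₊ : ℝ≥0∞) ^ p := by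
    intro x
    have h1 : (‖(∫ z, w z • f (x - z))‖₊ : ℝ≥0∞)
        ≤ ∫⁻ z, (‖w z‖₊ : ℝ≥0∞) * (‖f (x - z)‖₊ : ℝ≥0∞) := by
      refine le_trans (enorm_integral_le_lintegral_enorm _) (le_of_eq ?_)
      congr 1
      funext z
      exact enorm_smul _ _
    refine le_trans (ENNReal.rpow_le_rpow h1 hp0) ?_
    exact holder_step volume hp hwm.nnnorm.coe_nnreal_ennreal.aemeasurable
      ((hf.comp (measurable_const.sub measurable_id)).nnnorm.coe_nnreal_ennreal.aemeasurable)
  calc ∫⁻ x in ball y r, (‖(∫ z, w z • f (x - z))‖₊ : ℝ≥0∞) ^ p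
      ≤ ∫⁻ x in ball y r, W ^ (p - 1)
          * ∫⁻ z, (‖w z‖₊ : ℝ≥0∞) * (‖f (x - z)‖₊ : ℝ≥0∞) ^ p :=
        lintegral_mono fun x => hpt x
    _ = W ^ (p - 1) * ∫⁻ x in ball y r,
          ∫⁻ z, (‖w z‖₊ : ℝ≥0∞) * (‖f (x - z)‖₊ : ℝ≥0∞) ^ p :=
        lintegral_const_mul' _ _ (ENNReal.rpow_ne_top_of_nonneg (by linarith) hWfin)
    _ = W ^ (p - 1) * ∫⁻ z, ∫⁻ x in ball y r,
          (‖w z‖₊ : ℝ≥0∞) * (‖f (x - z)‖₊ : ℝ≥0∞) ^ p := by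
        congr 1
        refine lintegral_lintegral_swap ?_
        have : Measurable fun q : EuclideanSpace ℝ (Fin n) × EuclideanSpace ℝ (Fin n) =>
            (‖w q.2‖₊ : ℝ≥0∞) * (‖f (q.1 - q.2)‖₊ : ℝ≥0∞) ^ p :=
          ((hwm.comp measurable_snd).nnnorm.coe_nnreal_ennreal).mul
            (((hf.comp (measurable_fst.sub measurable_snd)).nnnorm.coe_nnreal_ennreal).pow_const p)
        exact this.aemeasurable
    _ = W ^ (p - 1) * ∫⁻ z, (‖w z‖₊ : ℝ≥0∞)
          * ∫⁻ x in ball (y - z) r, (‖f x‖₊ : ℝ≥0∞) ^ p := by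
        congr 1
        refine lintegral_congr fun z => ?_
        rw [lintegral_const_mul' _ _ ENNReal.coe_ne_top,
          lintegral_ball_translate (fun x => (‖f x‖₊ : ℝ≥0∞) ^ p) (hf.nnnorm.coe_nnreal_ennreal.pow_const p) y z r]
    _ ≤ W ^ (p - 1) * ∫⁻ z, (‖w z‖₊ : ℝ≥0∞) * D := by
        exact mul_le_mul_right (lintegral_mono fun z => mul_le_mul_right (hD (y - z)) _) _
    _ = W ^ (p - 1) * (W * D) := by
        rw [lintegral_mul_const _ hwm.nnnorm.coe_nnreal_ennreal]
    _ = W ^ p * D := by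
        rw [← mul_assoc]
        congr 1
        have h := (ENNReal.rpow_add_of_nonneg (x := W) (p - 1) 1
          (by linarith) zero_le_one).symm
        rw [ENNReal.rpow_one] at h
        rw [h]
        norm_num

private lemma scaled_integral {n : ℕ} {l : ℝ} (hl : 0 < l) (g : EuclideanSpace ℝ (Fin n) → ℝ) :
    ∫ z, (l ^ n)⁻¹ * g (l⁻¹ • z) = ∫ z, g z := by
  have h := MeasureTheory.Measure.integral_comp_smul (μ := volume) g l⁻¹
  rw [finrank_euclideanSpace_fin] at h
  rw [integral_const_mul, h, inv_pow, inv_inv, abs_of_pos (pow_pos hl n), smul_eq_mul,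
    ← mul_assoc, inv_mul_cancel₀ (ne_of_gt (pow_pos hl n)), one_mul]

private lemma scaled_support {n : ℕ} {ψ : EuclideanSpace ℝ (Fin n) → ℝ} {l R : ℝ} (hl : 0 < l)
    (hsup : tsupport ψ ⊆ closedBall 0 R) :
    ∀ z : EuclideanSpace ℝ (Fin n), (l ^ n)⁻¹ * ψ (l⁻¹ • z) ≠ 0 → ‖z‖ ≤ l * R := by
  intro z hz
  have h1 : ψ (l⁻¹ • z) ≠ 0 := right_ne_zero_of_mul hz
  have h2 : l⁻¹ • z ∈ closedBall (0 : EuclideanSpace ℝ (Fin n)) R :=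
    hsup (subset_tsupport ψ h1)
  rw [mem_closedBall, dist_zero_right, norm_smul, norm_inv, Real.norm_eq_abs,
    abs_of_pos hl] at h2
  calc ‖z‖ = l * (l⁻¹ * ‖z‖) := by field_simp
  _ ≤ l * R := by
    exact mul_le_mul_of_nonneg_left h2 hl.le

/-- Mollifier approximation in the Morrey norm: if `f` is bounded, uniformly continuous and
belongs to `L^{p,β}_0(ℝⁿ) ∩ L^{p,β}_∞(ℝⁿ)`, and `ψ ∈ C_c^∞(ℝⁿ)` with `∫ ψ = 1`, then with
`ψ_l(x) = l^{−n} ψ(x/l)` one has `‖f ∗ ψ_l − f‖_{L^{p,β}} → 0` as `l → 0⁺`. -/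
theorem mollifier_converges_morrey (n : ℕ) (hn : 1 ≤ n) (p β : ℝ)
    (hp : 1 ≤ p) (hβ : 0 < β) (hβn : β < n)
    (f : EuclideanSpace ℝ (Fin n) → ℂ) (hf : Measurable f)
    (hfbdd : ∃ M : ℝ, ∀ x, ‖f x‖ ≤ M) (hfuc : UniformContinuous f)
    (hfM : morreyNorm n p β f < ⊤)
    (h0 : vanishAtOrigin n p β f) (hi : vanishAtInfinity n p β f)
    (ψ : EuclideanSpace ℝ (Fin n) → ℝ)
    (hψsmooth : ContDiff ℝ (⊤ : ℕ∞) ψ) (hψsupp : HasCompactSupport ψ)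
    (hψint : ∫ x, ψ x = 1) :
    Tendsto (fun l : ℝ =>
        morreyNorm n p β
          (fun x => (∫ z, ((l ^ n)⁻¹ * ψ (l⁻¹ • z)) • f (x - z)) - f x))
      (nhdsWithin 0 (Set.Ioi 0)) (nhds 0) := by
  haveI : Nontrivial (EuclideanSpace ℝ (Fin n)) :=
    Module.nontrivial_of_finrank_pos (R := ℝ)
      (by rw [finrank_euclideanSpace_fin]; omega)
  obtain ⟨M, hM⟩ := hfbdd
  have hp0 : (0:ℝ) < p := lt_of_lt_of_le one_pos hp
  have hψcont : Continuous ψ := hψsmooth.continuous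
  obtain ⟨R₀, hR₀⟩ := hψsupp.isBounded.subset_closedBall 0
  set R : ℝ := max R₀ 0 with hRdef
  have hsupR : tsupport ψ ⊆ closedBall 0 R :=
    hR₀.trans (closedBall_subset_closedBall (le_max_left _ _))
  have hR0 : 0 ≤ R := le_max_right _ _
  set K : ℝ := ∫ z, |ψ z| with hKdef
  have hK1 : (1:ℝ) ≤ K := by
    have h1 : |∫ z, ψ z| ≤ ∫ z, |ψ z| := by
      simpa [Real.norm_eq_abs] using norm_integral_le_integral_norm (μ := volume) ψ
    rw [hψint] at h1
    simpa using h1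
  have hKpos : (0:ℝ) < K := lt_of_lt_of_le one_pos hK1
  set Kb : ℝ≥0∞ := ENNReal.ofReal K with hKbdef
  have hKbtop : Kb ≠ ⊤ := ENNReal.ofReal_ne_top
  unfold vanishAtInfinity at hi
  rw [ENNReal.tendsto_nhds_zero]
  intro ε hε
  rcases eq_top_or_lt_top ε with hεtop | hεlt
  · filter_upwards with l
    simp [hεtop]
  set δ : ℝ≥0∞ := (ε / (Kb + 1)) ^ p with hδdef
  have hbase_pos : 0 < ε / (Kb + 1) := ENNReal.div_pos hε.ne' (by finiteness)
  have hbase_top : ε / (Kb + 1) ≠ ⊤ := (ENNReal.div_lt_top hεlt.ne (by simp)).ne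
  have hδpos : 0 < δ := ENNReal.rpow_pos hbase_pos hbase_top
  have hδroot : δ ^ (1/p) = ε / (Kb + 1) := by
    rw [hδdef, ← ENNReal.rpow_mul, mul_one_div_cancel hp0.ne', ENNReal.rpow_one]
  have hδ' : (Kb + 1) * δ ^ (1/p) ≤ ε := by
    rw [hδroot, ENNReal.mul_div_cancel (by simp) (by finiteness)]
  obtain ⟨T, hT⟩ := ((ENNReal.tendsto_nhds_zero.mp hi δ hδpos).and
    (eventually_ge_atTop (1:ℝ))).exists
  have hT1 : (1:ℝ) ≤ T := hT.2
  have hfar : ∀ (y : EuclideanSpace ℝ (Fin n)) (r : ℝ), T ≤ r →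
      morreyA n p β f y r ≤ δ := by
    intro y r hr
    refine le_trans ?_ hT.1
    have h1 : morreyA n p β f y r ≤ ⨆ (_ : T ≤ r), morreyA n p β f y r :=
      le_iSup (fun _ : T ≤ r => morreyA n p β f y r) hr
    have h2 : (⨆ (_ : T ≤ r), morreyA n p β f y r)
        ≤ ⨆ (r' : ℝ) (_ : T ≤ r'), morreyA n p β f y r' :=
      le_iSup (fun r' => ⨆ (_ : T ≤ r'), morreyA n p β f y r') r
    exact h1.trans (h2.trans
      (le_iSup (fun y => ⨆ (r' : ℝ) (_ : T ≤ r'), morreyA n p β f y r') y))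
  set C₁ : ℝ≥0∞ := volume (ball (0 : EuclideanSpace ℝ (Fin n)) 1) with hC₁def
  have hC₁top : C₁ ≠ ⊤ := measure_ball_lt_top.ne
  set b : ℝ := T ^ ((n:ℝ) - β) * C₁.toReal + 1 with hbdef
  have hbpos : 0 < b := by
    have h1 : (0:ℝ) < T := lt_of_lt_of_le one_pos hT1
    have : 0 ≤ T ^ ((n:ℝ) - β) * C₁.toReal := by positivity
    linarith
  have hεppos : 0 < ε ^ p := ENNReal.rpow_pos hε hεlt.ne
  have hεptop : ε ^ p ≠ ⊤ := ENNReal.rpow_ne_top_of_nonneg hp0.le hεlt.ne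
  set η : ℝ := min 1 ((ε ^ p).toReal / b) with hηdef
  have hη0 : 0 < η :=
    lt_min one_pos (div_pos (ENNReal.toReal_pos hεppos.ne' hεptop) hbpos)
  have hηsmall : ENNReal.ofReal (η ^ p) * (ENNReal.ofReal (T ^ ((n:ℝ) - β)) * C₁)
      ≤ ε ^ p := by
    have h1 : η ^ p ≤ η := by
      calc η ^ p ≤ η ^ (1:ℝ) :=
            Real.rpow_le_rpow_of_exponent_ge hη0 (min_le_left _ _) hp
        _ = η := Real.rpow_one η
    have h2 : ENNReal.ofReal (T ^ ((n:ℝ) - β)) * C₁ ≤ ENNReal.ofReal b := by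
      calc ENNReal.ofReal (T ^ ((n:ℝ) - β)) * C₁
          = ENNReal.ofReal (T ^ ((n:ℝ) - β) * C₁.toReal) := by
            rw [ENNReal.ofReal_mul (by positivity), ENNReal.ofReal_toReal hC₁top]
        _ ≤ _ := ENNReal.ofReal_le_ofReal (by rw [hbdef]; linarith)
    calc ENNReal.ofReal (η ^ p) * (ENNReal.ofReal (T ^ ((n:ℝ) - β)) * C₁)
        ≤ ENNReal.ofReal η * ENNReal.ofReal b :=
          mul_le_mul (ENNReal.ofReal_le_ofReal h1) h2 (by positivity) (by positivity)
      _ = ENNReal.ofReal (η * b) := (ENNReal.ofReal_mul hη0.le).symm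
      _ ≤ ENNReal.ofReal ((ε ^ p).toReal) := by
          apply ENNReal.ofReal_le_ofReal
          calc η * b ≤ (ε ^ p).toReal / b * b :=
                mul_le_mul_of_nonneg_right (min_le_right _ _) hbpos.le
            _ = (ε ^ p).toReal := div_mul_cancel₀ _ hbpos.ne'
      _ = ε ^ p := ENNReal.ofReal_toReal hεptop
  obtain ⟨δ₀, hδ₀pos, hδ₀⟩ := Metric.uniformContinuous_iff.mp hfuc (η / K)
    (div_pos hη0 hKpos)
  filter_upwards [Ioo_mem_nhdsGT (show (0:ℝ) < δ₀ / (R + 1) by positivity)]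
    with l hl
  obtain ⟨hl0, hlu⟩ := hl
  have hlR : l * R < δ₀ := by
    have h1 : l * (R + 1) < δ₀ := (lt_div_iff₀ (by positivity)).mp hlu
    nlinarith
  set ψl : EuclideanSpace ℝ (Fin n) → ℝ := fun z => (l ^ n)⁻¹ * ψ (l⁻¹ • z) with hψldef
  have hψlapp : ∀ z, (l ^ n)⁻¹ * ψ (l⁻¹ • z) = ψl z := fun z => rfl
  have hψlcont : Continuous ψl :=
    continuous_const.mul (hψcont.comp (continuous_const_smul _))
  have hψlsupp : HasCompactSupport ψl := by
    apply HasCompactSupport.intro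
      (isCompact_closedBall (0 : EuclideanSpace ℝ (Fin n)) (l * R))
    intro x hx
    by_contra hne
    exact hx (mem_closedBall_zero_iff.mpr (scaled_support hl0 hsupR x hne))
  have hψlint : Integrable ψl := hψlcont.integrable_of_hasCompactSupport hψlsupp
  have hψl1 : ∫ z, ψl z = 1 := by
    rw [hψldef]
    rw [scaled_integral hl0 ψ]
    exact hψint
  have hψlabs : ∫ z, |ψl z| = K := by
    have habs : ∀ z, |ψl z| = (l ^ n)⁻¹ * |ψ (l⁻¹ • z)| := by
      intro z
      rw [hψldef, abs_mul, abs_of_nonneg (inv_nonneg.mpr (pow_nonneg hl0.le n))]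
    simp_rw [habs]
    exact scaled_integral hl0 (fun z => |ψ z|)
  have hψlW : ∫⁻ z, (‖ψl z‖₊ : ℝ≥0∞) = Kb := by
    rw [hKbdef, ← hψlabs]
    have := ofReal_integral_norm_eq_lintegral_enorm hψlint
    simp only [Real.norm_eq_abs] at this
    exact this.symm
  have hconvSM : StronglyMeasurable (fun x => ∫ z, ψl z • f (x - z)) := by
    apply MeasureTheory.StronglyMeasurable.integral_prod_right'
      (f := fun q : EuclideanSpace ℝ (Fin n) × EuclideanSpace ℝ (Fin n) =>
        ψl q.2 • f (q.1 - q.2))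
    exact ((hψlcont.measurable.comp measurable_snd).smul
      (hf.comp (measurable_fst.sub measurable_snd))).stronglyMeasurable
  have hunif : ∀ x, ‖(∫ z, ψl z • f (x - z)) - f x‖ ≤ η := by
    intro x
    have hint1 : Integrable (fun z => ψl z • f (x - z)) := by
      apply Integrable.mono' (hψlint.norm.mul_const (max M 0))
      · exact (hψlcont.measurable.smul
          (hf.comp (measurable_const.sub measurable_id))).aestronglyMeasurable
      · refine Filter.Eventually.of_forall fun z => ?_
        rw [norm_smul]
        exact mul_le_mul_of_nonneg_left (le_trans (hM _) (le_max_left _ _))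
          (norm_nonneg _)
    have hsplit : (∫ z, ψl z • f (x - z)) - f x = ∫ z, ψl z • (f (x - z) - f x) := by
      have h2 : Integrable (fun z => ψl z • f x) := hψlint.smul_const (f x)
      rw [show (fun z => ψl z • (f (x - z) - f x))
          = fun z => ψl z • f (x - z) - ψl z • f x by funext z; rw [smul_sub]]
      rw [integral_sub hint1 h2, integral_smul_const, hψl1, one_smul]
    rw [hsplit]
    calc ‖∫ z, ψl z • (f (x - z) - f x)‖ ≤ ∫ z, |ψl z| * (η / K) := by
          apply norm_integral_le_of_norm_le (hψlint.abs.mul_const _)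
          refine Filter.Eventually.of_forall fun z => ?_
          rw [norm_smul, Real.norm_eq_abs]
          rcases eq_or_ne (ψl z) 0 with h | h
          · simp [h]
          · have hz : ‖z‖ ≤ l * R := scaled_support hl0 hsupR z h
            have hd : dist (x - z) x < δ₀ := by
              rw [dist_eq_norm, sub_sub_cancel_left, norm_neg]
              exact lt_of_le_of_lt hz hlR
            have hdf := hδ₀ hd
            rw [dist_eq_norm] at hdf
            exact mul_le_mul_of_nonneg_left hdf.le (abs_nonneg _)
      _ = K * (η / K) := by rw [integral_mul_const, hψlabs]
      _ = η := by field_simp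
  simp only [hψlapp]
  unfold morreyNorm
  refine iSup_le fun y => iSup_le fun r => iSup_le fun hr => ?_
  unfold morreyA
  rcases le_or_gt r T with hrT | hrT
  · -- small radius
    have hA : ENNReal.ofReal (r ^ (-β))
        * (∫⁻ x in ball y r, (‖(∫ z, ψl z • f (x - z)) - f x‖₊ : ℝ≥0∞) ^ p)
        ≤ ε ^ p := by
      have hbound : ∀ x : EuclideanSpace ℝ (Fin n),
          (‖(∫ z, ψl z • f (x - z)) - f x‖₊ : ℝ≥0∞) ^ p ≤ ENNReal.ofReal (η ^ p) := by
        intro x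
        have h1 : (‖(∫ z, ψl z • f (x - z)) - f x‖₊ : ℝ≥0∞) ≤ ENNReal.ofReal η := by
          rw [← ENNReal.ofReal_coe_nnreal, coe_nnnorm]
          exact ENNReal.ofReal_le_ofReal (hunif x)
        calc (‖(∫ z, ψl z • f (x - z)) - f x‖₊ : ℝ≥0∞) ^ p
            ≤ (ENNReal.ofReal η) ^ p := ENNReal.rpow_le_rpow h1 hp0.le
          _ = ENNReal.ofReal (η ^ p) := ENNReal.ofReal_rpow_of_pos hη0
      have hvol : volume (ball y r) = ENNReal.ofReal (r ^ n) * C₁ := by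
        rw [hC₁def, Measure.addHaar_ball volume y hr.le, finrank_euclideanSpace_fin]
      have hint : ∫⁻ x in ball y r,
          (‖(∫ z, ψl z • f (x - z)) - f x‖₊ : ℝ≥0∞) ^ p
          ≤ ENNReal.ofReal (η ^ p) * (ENNReal.ofReal (r ^ n) * C₁) := by
        calc ∫⁻ x in ball y r, (‖(∫ z, ψl z • f (x - z)) - f x‖₊ : ℝ≥0∞) ^ p
            ≤ ∫⁻ _x in ball y r, ENNReal.ofReal (η ^ p) :=
              lintegral_mono fun x => hbound x
          _ = ENNReal.ofReal (η ^ p) * volume (ball y r) := setLIntegral_const _ _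
          _ = ENNReal.ofReal (η ^ p) * (ENNReal.ofReal (r ^ n) * C₁) := by rw [hvol]
      have hrexp : ENNReal.ofReal (r ^ (-β)) * ENNReal.ofReal (r ^ n)
          ≤ ENNReal.ofReal (T ^ ((n:ℝ) - β)) := by
        rw [← ENNReal.ofReal_mul (by positivity)]
        apply ENNReal.ofReal_le_ofReal
        have he : r ^ (-β) * r ^ n = r ^ ((n:ℝ) - β) := by
          rw [← Real.rpow_natCast r n, ← Real.rpow_add hr]
          ring_nf
        rw [he]
        exact Real.rpow_le_rpow hr.le hrT (by linarith)
      calc ENNReal.ofReal (r ^ (-β))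
          * (∫⁻ x in ball y r, (‖(∫ z, ψl z • f (x - z)) - f x‖₊ : ℝ≥0∞) ^ p)
          ≤ ENNReal.ofReal (r ^ (-β))
            * (ENNReal.ofReal (η ^ p) * (ENNReal.ofReal (r ^ n) * C₁)) :=
            mul_le_mul_right hint _
        _ = ENNReal.ofReal (η ^ p)
            * ((ENNReal.ofReal (r ^ (-β)) * ENNReal.ofReal (r ^ n)) * C₁) := by ring
        _ ≤ ENNReal.ofReal (η ^ p) * (ENNReal.ofReal (T ^ ((n:ℝ) - β)) * C₁) := by
            exact mul_le_mul_right (mul_le_mul_left hrexp _) _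
        _ ≤ ε ^ p := hηsmall
    calc (ENNReal.ofReal (r ^ (-β))
        * ∫⁻ x in ball y r, (‖(∫ z, ψl z • f (x - z)) - f x‖₊ : ℝ≥0∞) ^ p) ^ (1/p)
        ≤ (ε ^ p) ^ (1/p) := ENNReal.rpow_le_rpow hA (by positivity)
      _ = ε := by
        rw [← ENNReal.rpow_mul, mul_one_div_cancel hp0.ne', ENNReal.rpow_one]
  · -- large radius
    have hr' : T ≤ r := hrT.le
    have hrpos : (0:ℝ) < r := hr
    have hD : ∀ y' : EuclideanSpace ℝ (Fin n),
        ∫⁻ x in ball y' r, (‖f x‖₊ : ℝ≥0∞) ^ p ≤ ENNReal.ofReal (r ^ β) * δ := by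
      intro y'
      have h1 := hfar y' r hr'
      unfold morreyA at h1
      have h2 := mul_le_mul_right h1 (ENNReal.ofReal (r ^ β))
      rw [← mul_assoc, ← ENNReal.ofReal_mul (by positivity), ← Real.rpow_add hrpos,
        add_neg_cancel, Real.rpow_zero, ENNReal.ofReal_one, one_mul] at h2
      exact h2
    have hconv_bound := conv_morrey_bound hp f hf ψl hψlcont hψlsupp y r _ hD
    rw [hψlW] at hconv_bound
    have htri : (∫⁻ x in ball y r,
          (‖(∫ z, ψl z • f (x - z)) - f x‖₊ : ℝ≥0∞) ^ p) ^ (1/p)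
        ≤ (∫⁻ x in ball y r, (‖(∫ z, ψl z • f (x - z))‖₊ : ℝ≥0∞) ^ p) ^ (1/p)
          + (∫⁻ x in ball y r, (‖f x‖₊ : ℝ≥0∞) ^ p) ^ (1/p) := by
      have h0' : ∀ x : EuclideanSpace ℝ (Fin n),
          (‖(∫ z, ψl z • f (x - z)) - f x‖₊ : ℝ≥0∞) ^ p
          ≤ ((fun x => (‖(∫ z, ψl z • f (x - z))‖₊ : ℝ≥0∞))
              + fun x => (‖f x‖₊ : ℝ≥0∞)) x ^ p := by
        intro x
        apply ENNReal.rpow_le_rpow _ hp0.le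
        simp only [Pi.add_apply]
        rw [← ENNReal.coe_add]
        exact ENNReal.coe_le_coe.mpr (nnnorm_sub_le _ _)
      refine le_trans (ENNReal.rpow_le_rpow (lintegral_mono h0') (by positivity)) ?_
      exact ENNReal.lintegral_Lp_add_le hconvSM.measurable.nnnorm.coe_nnreal_ennreal.aemeasurable
        hf.nnnorm.coe_nnreal_ennreal.aemeasurable hp
    have hc1 : ENNReal.ofReal (r ^ (-β)) * ENNReal.ofReal (r ^ β) = 1 := by
      rw [← ENNReal.ofReal_mul (by positivity), ← Real.rpow_add hrpos]
      norm_num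
    have hI1 : ENNReal.ofReal (r ^ (-β))
        * ∫⁻ x in ball y r, (‖(∫ z, ψl z • f (x - z))‖₊ : ℝ≥0∞) ^ p ≤ Kb ^ p * δ := by
      calc ENNReal.ofReal (r ^ (-β))
          * ∫⁻ x in ball y r, (‖(∫ z, ψl z • f (x - z))‖₊ : ℝ≥0∞) ^ p
          ≤ ENNReal.ofReal (r ^ (-β)) * (Kb ^ p * (ENNReal.ofReal (r ^ β) * δ)) :=
            mul_le_mul_right hconv_bound _
        _ = (ENNReal.ofReal (r ^ (-β)) * ENNReal.ofReal (r ^ β)) * (Kb ^ p * δ) := by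
            ring
        _ = Kb ^ p * δ := by rw [hc1, one_mul]
    have hI2 : ENNReal.ofReal (r ^ (-β)) * ∫⁻ x in ball y r, (‖f x‖₊ : ℝ≥0∞) ^ p ≤ δ :=
      hfar y r hr'
    calc (ENNReal.ofReal (r ^ (-β))
        * ∫⁻ x in ball y r, (‖(∫ z, ψl z • f (x - z)) - f x‖₊ : ℝ≥0∞) ^ p) ^ (1/p)
        = (ENNReal.ofReal (r ^ (-β))) ^ (1/p)
          * (∫⁻ x in ball y r,
              (‖(∫ z, ψl z • f (x - z)) - f x‖₊ : ℝ≥0∞) ^ p) ^ (1/p) :=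
          ENNReal.mul_rpow_of_nonneg _ _ (by positivity)
      _ ≤ (ENNReal.ofReal (r ^ (-β))) ^ (1/p)
          * ((∫⁻ x in ball y r, (‖(∫ z, ψl z • f (x - z))‖₊ : ℝ≥0∞) ^ p) ^ (1/p)
            + (∫⁻ x in ball y r, (‖f x‖₊ : ℝ≥0∞) ^ p) ^ (1/p)) :=
          mul_le_mul_right htri _
      _ = (ENNReal.ofReal (r ^ (-β))
            * ∫⁻ x in ball y r, (‖(∫ z, ψl z • f (x - z))‖₊ : ℝ≥0∞) ^ p) ^ (1/p)
          + (ENNReal.ofReal (r ^ (-β))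
            * ∫⁻ x in ball y r, (‖f x‖₊ : ℝ≥0∞) ^ p) ^ (1/p) := by
          rw [mul_add, ← ENNReal.mul_rpow_of_nonneg _ _ (by positivity : (0:ℝ) ≤ 1/p),
            ← ENNReal.mul_rpow_of_nonneg _ _ (by positivity : (0:ℝ) ≤ 1/p)]
      _ ≤ (Kb ^ p * δ) ^ (1/p) + δ ^ (1/p) := by
          exact add_le_add (ENNReal.rpow_le_rpow hI1 (by positivity))
            (ENNReal.rpow_le_rpow hI2 (by positivity))
      _ = Kb * δ ^ (1/p) + δ ^ (1/p) := by
          rw [ENNReal.mul_rpow_of_nonneg _ _ (by positivity : (0:ℝ) ≤ 1/p),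
            ← ENNReal.rpow_mul, mul_one_div_cancel hp0.ne', ENNReal.rpow_one]
      _ = (Kb + 1) * δ ^ (1/p) := by ring
      _ ≤ ε := hδ'
end
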